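/- arXiv:1107.3946 — 9 statements merged into one kernel-verified Lean document; each statement's English description precedes it below -/
import Mathlib

section
/- Let λ be an infinite type. Every complete algebraic lattice L with at most 2^#λ compact elements admits an injective map Φ from L into the lattice of submonoids of the symmetric group Equiv.Perm λ (submonoids under composition, not necessarily subgroups) such that Φ preserves all nonempty suprema and all nonempty infima, and moreover Φ maps the smallest element of L to the trivial submonoid consisting only of the identity permutation. -/
/-!
A nonzero compact element `c ≤ t` contributes a generator to the submonoid `ψ t` of a free abelian
group, and every cover `c ≤ a ⊔ b` by compact `a`, `b` cuts it into two generators labelled `a`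
and `b` that add up to it. Since a compact element below `t ⊔ u` lies below such an `a ⊔ b` with
`a ≤ t` and `b ≤ u`, `ψ` preserves joins. Conversely, every element of `ψ t` is the sum of a
unique multiset of generators containing no two halves of the same cut, and the labels occurring
in it are then all below `t`; this gives injectivity and preservation of nonempty meets.

The free abelian group has a basis of size at most `2 ^ #λ`, so its basis embeds into `Set λ`.
It then acts faithfully on `#λ` points: on each of the countable groups indexed by the finite
`A ⊆ λ` it acts by translation, through the traces of the basis on `A`.
-/

theorem Multiset.sum_map_ite_eq_count {α : Type*} [DecidableEq α] (S : Multiset α) (a : α) :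
    (S.map fun x => if x = a then (1 : ℤ) else 0).sum = S.count a := by
  induction S using Multiset.induction_on with
  | empty => simp
  | cons b S ih => by_cases h : b = a <;> simp [h, Ne.symm, ih, add_comm]

open CompleteLattice

open scoped Classical in
theorem IsCompactElement.exists_le_sup_of_le_sup {L : Type*} [CompleteLattice L]
    [IsCompactlyGenerated L] {c t u : L} (hc : IsCompactElement c) (h : c ≤ t ⊔ u) :
    ∃ a b : L, IsCompactElement a ∧ IsCompactElement b ∧ a ≤ t ∧ b ≤ u ∧ c ≤ a ⊔ b := by
  rw [← sSup_compact_le_eq t, ← sSup_compact_le_eq u, ← sSup_union] at h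
  obtain ⟨G, hG, hcG⟩ := (isCompactElement_iff_exists_le_sSup_of_le_sSup (k := c)).1 hc _ h
  obtain ⟨G₁, G₂, rfl, hG₁, hG₂⟩ := Finset.subset_union_elim hG
  refine ⟨G₁.sup id, G₂.sup id, isCompactElement_finsetSup _ fun x hx => (hG₁ hx).1,
    isCompactElement_finsetSup _ fun x hx => (hG₂ hx).1.1, Finset.sup_le fun x hx => (hG₁ hx).2,
    Finset.sup_le fun x hx => (hG₂ hx).1.2, ?_⟩
  rwa [Finset.sup_union] at hcG

universe u

namespace PermMonLattice

open scoped Classical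

section FreeAbelianGroup

variable {α B : Type u}

noncomputable def traceOn (s : B → Set α) (A : Finset α) (b : B) : Finset α := {x ∈ A | x ∈ s b}

theorem exists_finset_injOn_traceOn {s : B → Set α} (hs : Function.Injective s) (T : Finset B) :
    ∃ A : Finset α, Set.InjOn (traceOn s A) T := by
  have hsep : ∀ b b', ∃ A : Finset α, (∀ x ∈ A, x ∈ s b ↔ x ∈ s b') → b = b' := by
    intro b b'
    by_cases h : s b = s b'
    · exact ⟨∅, fun _ => hs h⟩
    · obtain ⟨x, hx⟩ := not_forall.1 (mt Set.ext h)
      exact ⟨{x}, fun hA => absurd (hA x (Finset.mem_singleton_self x)) hx⟩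
  choose f hf using hsep
  refine ⟨(T ×ˢ T).biUnion fun p => f p.1 p.2, fun b hb b' hb' h => hf b b' fun x hx => ?_⟩
  have hxA : x ∈ (T ×ˢ T).biUnion fun p => f p.1 p.2 :=
    Finset.mem_biUnion.2 ⟨(b, b'), Finset.mem_product.2 ⟨hb, hb'⟩, hx⟩
  simpa only [traceOn, Finset.mem_filter, hxA, true_and] using (congrArg (x ∈ ·) h).to_iff

theorem eq_of_forall_mapDomain_traceOn_eq {M : Type*} [AddCommMonoid M] {s : B → Set α}
    (hs : Function.Injective s) {q q' : B →₀ M}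
    (h : ∀ A, q.mapDomain (traceOn s A) = q'.mapDomain (traceOn s A)) : q = q' := by
  obtain ⟨A, hA⟩ := exists_finset_injOn_traceOn hs (q.support ∪ q'.support)
  exact Finsupp.mapDomain_injOn _ hA (Finset.coe_subset.2 Finset.subset_union_left)
    (Finset.coe_subset.2 Finset.subset_union_right) (h A)

open Cardinal Equiv in
theorem exists_monoidHom_perm_injective [Infinite α] (h : #B ≤ 2 ^ #α) :
    ∃ θ : Multiplicative (B →₀ ℤ) →* Perm α, Function.Injective θ := by
  obtain ⟨s⟩ : Nonempty (B ↪ Set α) := by rwa [← Cardinal.le_def, Cardinal.mk_set]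
  let θ₀ : Multiplicative (B →₀ ℤ) →* Perm (Σ _ : Finset α, Multiplicative (Finset α →₀ ℤ)) :=
    (Perm.sigmaCongrRightHom _).comp <| MonoidHom.pi fun A =>
      (MulAction.toPermHom _ _).comp
        (Finsupp.mapDomain.addMonoidHom (traceOn s A)).toMultiplicative
  obtain ⟨e⟩ : Nonempty ((Σ _ : Finset α, Multiplicative (Finset α →₀ ℤ)) ↪ α) := by
    rw [← Cardinal.le_def]
    simp
  refine ⟨(Perm.viaEmbeddingHom e).comp θ₀, (Perm.viaEmbeddingHom_injective e).comp
    (Perm.sigmaCongrRightHom_injective.comp fun q q' hq => ?_)⟩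
  exact eq_of_forall_mapDomain_traceOn_eq s.injective fun A =>
    MulAction.toPerm_injective (α := Multiplicative (Finset α →₀ ℤ)) (congr_fun hq A)

end FreeAbelianGroup

section MapToSubmonoid

variable {G N : Type*} [AddMonoid G] [Monoid N] (θ : Multiplicative G →* N)

theorem map_toSubmonoid_sSup (X : Set (AddSubmonoid G)) :
    (AddSubmonoid.toSubmonoid (sSup X)).map θ =
      sSup ((fun P => (AddSubmonoid.toSubmonoid P).map θ) '' X) := by
  rw [OrderIso.map_sSup, sSup_image]
  simp only [Submonoid.map_iSup]

theorem map_toSubmonoid_sInf (hθ : Function.Injective θ) {X : Set (AddSubmonoid G)}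
    (hX : X.Nonempty) :
    (AddSubmonoid.toSubmonoid (sInf X)).map θ =
      sInf ((fun P => (AddSubmonoid.toSubmonoid P).map θ) '' X) := by
  have := hX.to_subtype
  rw [OrderIso.map_sInf, sInf_image', ← iInf_subtype'', Submonoid.map_iInf θ hθ]

end MapToSubmonoid

variable {L : Type u} [CompleteLattice L]

abbrev CompactElem (L : Type u) [CompleteLattice L] : Type u := {c : L // IsCompactElement c}

/-- `left x a b` and `right x a b` are the two halves into which the piece `x` is cut along a
cover `x.label ≤ a ⊔ b`; they carry the labels `a` and `b`. -/
inductive Piece (L : Type u) [CompleteLattice L] : Type u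
  | atom : CompactElem L → Piece L
  | left : Piece L → CompactElem L → CompactElem L → Piece L
  | right : Piece L → CompactElem L → CompactElem L → Piece L

abbrev Coord (L : Type u) [CompleteLattice L] : Type u :=
  CompactElem L ⊕ (Piece L × CompactElem L × CompactElem L)

namespace Piece

def label : Piece L → L
  | atom c => c
  | left _ a _ => a
  | right _ _ b => b

def depth : Piece L → ℕ
  | atom _ => 0
  | left x _ _ => x.depth + 1
  | right x _ _ => x.depth + 1

def Valid : Piece L → Prop
  | atom c => (c : L) ≠ ⊥
  | left x a b => x.Valid ∧ x.label ≤ (a : L) ⊔ b ∧ (a : L) ≠ ⊥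
  | right x a b => x.Valid ∧ x.label ≤ (a : L) ⊔ b ∧ (b : L) ≠ ⊥

def IsAdmissible (t : L) (ℓ : Piece L) : Prop := ℓ.Valid ∧ ℓ.label ≤ t

theorem isCompactElement_label (ℓ : Piece L) : IsCompactElement ℓ.label := by
  cases ℓ with
  | atom c => exact c.2
  | left _ a _ => exact a.2
  | right _ _ b => exact b.2

theorem Valid.label_ne_bot {ℓ : Piece L} (h : ℓ.Valid) : ℓ.label ≠ ⊥ := by
  cases ℓ with
  | atom _ => exact h
  | left _ _ _ => exact h.2.2
  | right _ _ _ => exact h.2.2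

noncomputable def vec : Piece L → (Coord L →₀ ℤ)
  | atom c => Finsupp.single (.inl c) 1
  | left x a b => Finsupp.single (.inr (x, a, b)) 1
  | right x a b => x.vec - Finsupp.single (.inr (x, a, b)) 1

theorem vec_left_add_vec_right (x : Piece L) (a b : CompactElem L) :
    (left x a b).vec + (right x a b).vec = x.vec := by
  simp [vec]

theorem vec_apply_inl_of_depth_eq_zero {ℓ : Piece L} (h : ℓ.depth = 0) (c : CompactElem L) :
    ℓ.vec (.inl c) = if ℓ = atom c then 1 else 0 := by
  cases ℓ with
  | atom c' => simp [vec, Finsupp.single_apply]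
  | left _ _ _ | right _ _ _ => simp [depth] at h

theorem vec_apply_inr_of_depth_le {ℓ x : Piece L} (h : ℓ.depth ≤ x.depth) (a b : CompactElem L) :
    ℓ.vec (.inr (x, a, b)) = 0 := by
  induction ℓ with
  | atom c => simp [vec]
  | left y a' b' =>
    simp only [depth] at h
    rw [vec, Finsupp.single_apply, if_neg]
    rintro ⟨⟩
    omega
  | right y a' b' ih =>
    simp only [depth] at h
    rw [vec, Finsupp.sub_apply, ih (by omega), Finsupp.single_apply, if_neg, sub_zero]
    rintro ⟨⟩
    omega

theorem vec_apply_inr_of_depth_le_succ {ℓ x : Piece L} (h : ℓ.depth ≤ x.depth + 1)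
    (a b : CompactElem L) :
    ℓ.vec (.inr (x, a, b)) =
      (if ℓ = left x a b then 1 else 0) - (if ℓ = right x a b then 1 else 0) := by
  cases ℓ with
  | atom c => simp [vec]
  | left y a' b' =>
    simp [vec, Finsupp.single_apply, eq_comm]
  | right y a' b' =>
    simp only [depth, add_le_add_iff_right] at h
    simp [vec, vec_apply_inr_of_depth_le h, Finsupp.single_apply, eq_comm]

end Piece

open Piece

def Reduced (S : Multiset (Piece L)) : Prop :=
  ∀ x a b, left x a b ∈ S → right x a b ∉ S

theorem Reduced.mono {S T : Multiset (Piece L)} (hT : Reduced T) (h : S ≤ T) : Reduced S :=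
  fun x a b hl hr => hT x a b (Multiset.mem_of_le h hl) (Multiset.mem_of_le h hr)

theorem sum_vec_apply (S : Multiset (Piece L)) (i : Coord L) :
    (S.map vec).sum i = (S.map fun ℓ => ℓ.vec i).sum := by
  rw [← Finsupp.applyAddHom_apply, map_multiset_sum, Multiset.map_map]
  rfl

theorem sum_vec_apply_inl {S : Multiset (Piece L)} (h : ∀ ℓ ∈ S, ℓ.depth = 0)
    (c : CompactElem L) : (S.map vec).sum (.inl c) = S.count (atom c) := by
  rw [sum_vec_apply,
    Multiset.map_congr rfl fun ℓ hℓ => vec_apply_inl_of_depth_eq_zero (h ℓ hℓ) c,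
    Multiset.sum_map_ite_eq_count]

theorem sum_vec_apply_inr {S : Multiset (Piece L)} {x : Piece L}
    (h : ∀ ℓ ∈ S, ℓ.depth ≤ x.depth + 1) (a b : CompactElem L) :
    (S.map vec).sum (.inr (x, a, b)) = S.count (left x a b) - S.count (right x a b) := by
  rw [sum_vec_apply,
    Multiset.map_congr rfl fun ℓ hℓ => vec_apply_inr_of_depth_le_succ (h ℓ hℓ) a b,
    Multiset.sum_map_sub, Multiset.sum_map_ite_eq_count, Multiset.sum_map_ite_eq_count]

/-- A piece of maximal depth is detected by a single coordinate: the one of its atom, or that of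
the cut producing it, where only it and its twin half contribute. -/
theorem Reduced.count_eq_of_forall_depth_le {S T : Multiset (Piece L)} (hS : Reduced S)
    (hT : Reduced T) (hsum : (S.map vec).sum = (T.map vec).sum) {ℓ₀ : Piece L}
    (hmax : ∀ ℓ ∈ S + T, ℓ.depth ≤ ℓ₀.depth) : S.count ℓ₀ = T.count ℓ₀ := by
  have hmaxS ℓ (hℓ : ℓ ∈ S) := hmax ℓ (Multiset.mem_add.2 (.inl hℓ))
  have hmaxT ℓ (hℓ : ℓ ∈ T) := hmax ℓ (Multiset.mem_add.2 (.inr hℓ))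
  cases ℓ₀ with
  | atom c =>
    have hc := congr($hsum (.inl c))
    rw [sum_vec_apply_inl (fun ℓ hℓ => Nat.le_zero.1 (hmaxS ℓ hℓ)),
      sum_vec_apply_inl (fun ℓ hℓ => Nat.le_zero.1 (hmaxT ℓ hℓ))] at hc
    exact_mod_cast hc
  | left x a b | right x a b =>
    have hc := congr($hsum (.inr (x, a, b)))
    rw [sum_vec_apply_inr hmaxS, sum_vec_apply_inr hmaxT] at hc
    have hS' : S.count (left x a b) = 0 ∨ S.count (right x a b) = 0 := by
      simpa only [Multiset.count_eq_zero, imp_iff_not_or] using hS x a b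
    have hT' : T.count (left x a b) = 0 ∨ T.count (right x a b) = 0 := by
      simpa only [Multiset.count_eq_zero, imp_iff_not_or] using hT x a b
    omega

theorem Reduced.eq_of_sum_vec_eq {S T : Multiset (Piece L)} (hS : Reduced S) (hT : Reduced T)
    (hsum : (S.map vec).sum = (T.map vec).sum) : S = T := by
  induction S using Multiset.strongInductionOn generalizing T with
  | ih S ih =>
    rcases eq_or_ne (S + T) 0 with h0 | h0
    · rw [add_eq_zero] at h0
      rw [h0.1, h0.2]
    obtain ⟨ℓ₀, hℓ₀, hmax⟩ := Multiset.exists_max_image depth h0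
    have hcount := hS.count_eq_of_forall_depth_le hT hsum hmax
    have hℓ₀S : ℓ₀ ∈ S := by
      rcases Multiset.mem_add.1 hℓ₀ with h | h
      · exact h
      · rwa [← Multiset.count_pos, hcount, Multiset.count_pos]
    have hℓ₀T : ℓ₀ ∈ T := by rwa [← Multiset.count_pos, ← hcount, Multiset.count_pos]
    rw [← Multiset.cons_erase hℓ₀S, ← Multiset.cons_erase hℓ₀T] at hsum ⊢
    simp only [Multiset.map_cons, Multiset.sum_cons, add_right_inj] at hsum
    rw [ih _ (Multiset.erase_lt.2 hℓ₀S) (hS.mono (Multiset.erase_le _ _))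
      (hT.mono (Multiset.erase_le _ _)) hsum]

noncomputable def psi (t : L) : AddSubmonoid (Coord L →₀ ℤ) :=
  AddSubmonoid.closure (vec '' {ℓ | ℓ.IsAdmissible t})

theorem psi_mono : Monotone (psi (L := L)) := fun _ _ h =>
  AddSubmonoid.closure_mono (Set.image_mono fun _ hℓ => ⟨hℓ.1, hℓ.2.trans h⟩)

theorem vec_mem_psi {ℓ : Piece L} {t : L} (h : ℓ.IsAdmissible t) : ℓ.vec ∈ psi t :=
  AddSubmonoid.subset_closure ⟨ℓ, h, rfl⟩

theorem exists_multiset_of_mem_psi {t : L} {q : Coord L →₀ ℤ} (h : q ∈ psi t) :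
    ∃ S : Multiset (Piece L), (∀ ℓ ∈ S, ℓ.IsAdmissible t) ∧ (S.map vec).sum = q := by
  induction h using AddSubmonoid.closure_induction with
  | mem _ hq =>
    obtain ⟨ℓ, hℓ, rfl⟩ := hq
    exact ⟨{ℓ}, by simpa using hℓ, by simp⟩
  | zero => exact ⟨0, by simp, by simp⟩
  | add _ _ _ _ hq hr =>
    obtain ⟨S, hS, rfl⟩ := hq
    obtain ⟨T, hT, rfl⟩ := hr
    exact ⟨S + T, by simpa [or_imp, forall_and] using ⟨hS, hT⟩, by simp⟩

theorem exists_reduced_of_forall_isAdmissible {t : L} (S : Multiset (Piece L))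
    (hS : ∀ ℓ ∈ S, ℓ.IsAdmissible t) :
    ∃ T, Reduced T ∧ (∀ ℓ ∈ T, ℓ.IsAdmissible t) ∧ (T.map vec).sum = (S.map vec).sum := by
  induction hn : S.card using Nat.strong_induction_on generalizing S with
  | _ n ih =>
    by_cases hred : Reduced S
    · exact ⟨S, hred, hS, rfl⟩
    obtain ⟨x, a, b, hl, hr⟩ : ∃ x a b, left x a b ∈ S ∧ right x a b ∈ S := by
      simpa [Reduced] using hred
    have hr' : right x a b ∈ S.erase (left x a b) := (Multiset.mem_erase_of_ne (by simp)).2 hr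
    set S₀ := (S.erase (left x a b)).erase (right x a b)
    have hS₀ : S = left x a b ::ₘ right x a b ::ₘ S₀ := by
      rw [Multiset.cons_erase hr', Multiset.cons_erase hl]
    obtain ⟨⟨hxv, hxab, -⟩, hat⟩ := hS _ hl
    obtain ⟨-, hbt⟩ := hS _ hr
    have hxS₀ : ∀ ℓ ∈ x ::ₘ S₀, ℓ.IsAdmissible t := by
      rw [hS₀] at hS
      simp only [Multiset.mem_cons, forall_eq_or_imp] at hS ⊢
      exact ⟨⟨hxv, hxab.trans (sup_le hat hbt)⟩, hS.2.2⟩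
    obtain ⟨T, hT, hTadm, hTsum⟩ :=
      ih _ (by rw [← hn, hS₀]; simp) (x ::ₘ S₀) hxS₀ rfl
    refine ⟨T, hT, hTadm, ?_⟩
    rw [hTsum, hS₀]
    simp only [Multiset.map_cons, Multiset.sum_cons, ← add_assoc, vec_left_add_vec_right]

theorem exists_reduced_of_mem_psi {t : L} {q : Coord L →₀ ℤ} (h : q ∈ psi t) :
    ∃ T, Reduced T ∧ (∀ ℓ ∈ T, ℓ.IsAdmissible t) ∧ (T.map vec).sum = q := by
  obtain ⟨S, hS, rfl⟩ := exists_multiset_of_mem_psi h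
  exact exists_reduced_of_forall_isAdmissible S hS

theorem Reduced.isAdmissible_of_sum_mem_psi {S : Multiset (Piece L)} {t : L} (hS : Reduced S)
    (h : (S.map vec).sum ∈ psi t) : ∀ ℓ ∈ S, ℓ.IsAdmissible t := by
  obtain ⟨T, hT, hTadm, hTsum⟩ := exists_reduced_of_mem_psi h
  rwa [hS.eq_of_sum_vec_eq hT hTsum.symm]

theorem psi_bot : psi (⊥ : L) = ⊥ := by
  rw [eq_bot_iff, psi, AddSubmonoid.closure_le]
  rintro _ ⟨ℓ, ⟨hv, hle⟩, rfl⟩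
  exact absurd (le_bot_iff.1 hle) hv.label_ne_bot

theorem psi_sup [IsCompactlyGenerated L] (t u : L) : psi (t ⊔ u) = psi t ⊔ psi u := by
  refine le_antisymm (AddSubmonoid.closure_le.2 ?_)
    (sup_le (psi_mono le_sup_left) (psi_mono le_sup_right))
  rintro _ ⟨ℓ, ⟨hv, hle⟩, rfl⟩
  obtain ⟨a, b, ha, hb, hat, hbu, hab⟩ := ℓ.isCompactElement_label.exists_le_sup_of_le_sup hle
  rcases eq_or_ne a ⊥ with rfl | ha0
  · exact AddSubmonoid.mem_sup_right (vec_mem_psi ⟨hv, (bot_sup_eq b ▸ hab).trans hbu⟩)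
  rcases eq_or_ne b ⊥ with rfl | hb0
  · exact AddSubmonoid.mem_sup_left (vec_mem_psi ⟨hv, (sup_bot_eq a ▸ hab).trans hat⟩)
  rw [← vec_left_add_vec_right ℓ ⟨a, ha⟩ ⟨b, hb⟩]
  exact AddSubmonoid.add_mem_sup (vec_mem_psi ⟨⟨hv, hab, ha0⟩, hat⟩)
    (vec_mem_psi ⟨⟨hv, hab, hb0⟩, hbu⟩)

theorem psi_sSup [IsCompactlyGenerated L] (S : Set L) : psi (sSup S) = sSup (psi '' S) := by
  rw [sSup_image]
  refine le_antisymm (AddSubmonoid.closure_le.2 ?_) (iSup₂_le fun s hs => psi_mono (le_sSup hs))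
  rintro _ ⟨ℓ, ⟨hv, hle⟩, rfl⟩
  obtain ⟨F, hFS, hF⟩ :=
    (isCompactElement_iff_exists_le_sSup_of_le_sSup (k := ℓ.label)).1
      ℓ.isCompactElement_label S hle
  have hmem : ℓ.vec ∈ psi (F.sup id) := vec_mem_psi ⟨hv, hF⟩
  rw [Finset.apply_sup_eq_sup_comp psi psi_sup psi_bot] at hmem
  refine SetLike.le_def.1 (Finset.sup_le fun s hs => ?_) hmem
  exact le_iSup₂_of_le (f := fun s _ => psi s) s (hFS hs) le_rfl

theorem psi_sInf {S : Set L} (hS : S.Nonempty) : psi (sInf S) = sInf (psi '' S) := by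
  rw [sInf_image]
  refine le_antisymm (le_iInf₂ fun s hs => psi_mono (sInf_le hs)) fun q hq => ?_
  have hqS : ∀ s ∈ S, q ∈ psi s := fun s hs =>
    AddSubmonoid.mem_iInf.1 (AddSubmonoid.mem_iInf.1 hq s) hs
  obtain ⟨s₀, hs₀⟩ := hS
  obtain ⟨T, hT, hTadm, rfl⟩ := exists_reduced_of_mem_psi (hqS s₀ hs₀)
  refine AddSubmonoid.multiset_sum_mem _ _ fun _ hq => ?_
  obtain ⟨ℓ, hℓ, rfl⟩ := Multiset.mem_map.1 hq
  exact vec_mem_psi ⟨(hTadm ℓ hℓ).1,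
    le_sInf fun s hs => (hT.isAdmissible_of_sum_mem_psi (hqS s hs) ℓ hℓ).2⟩

theorem le_of_psi_le [IsCompactlyGenerated L] {t u : L} (h : psi t ≤ psi u) : t ≤ u := by
  refine le_iff_compact_le_imp.2 fun c hc hct => ?_
  rcases eq_or_ne c ⊥ with rfl | hc0
  · exact bot_le
  have hred : Reduced {atom ⟨c, hc⟩} := fun x a b hl => by simp at hl
  have hmem : (({atom ⟨c, hc⟩} : Multiset (Piece L)).map vec).sum ∈ psi u := by
    simpa using h (vec_mem_psi (ℓ := atom ⟨c, hc⟩) ⟨hc0, hct⟩)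
  exact (hred.isAdmissible_of_sum_mem_psi hmem _ (Multiset.mem_singleton_self _)).2

theorem psi_injective [IsCompactlyGenerated L] : Function.Injective (psi (L := L)) :=
  fun _ _ h => le_antisymm (le_of_psi_le h.le) (le_of_psi_le h.ge)

namespace Piece

def encode : Piece L → List (CompactElem L ⊕ Bool × CompactElem L × CompactElem L)
  | atom c => [.inl c]
  | left x a b => .inr (false, a, b) :: x.encode
  | right x a b => .inr (true, a, b) :: x.encode

theorem encode_injective : Function.Injective (encode (L := L)) := by
  intro x
  induction x <;> intro y h <;> cases y <;> grind [encode]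

end Piece

open Cardinal in
theorem mk_coord_le {μ : Cardinal.{u}} (hμ : ℵ₀ ≤ μ) (h : #(CompactElem L) ≤ μ) :
    #(Coord L) ≤ μ := by
  have hpairs : #(CompactElem L × CompactElem L) ≤ μ := by
    simpa using mul_le_of_le hμ h h
  have hpiece : #(Piece L) ≤ μ := by
    refine (mk_le_of_injective Piece.encode_injective).trans ((mk_list_le_max _).trans ?_)
    refine max_le hμ ?_
    simpa using add_le_of_le hμ h (mul_le_of_le hμ (ofNat_le_aleph0.trans hμ) hpairs)
  simpa using add_le_of_le hμ h (mul_le_of_le hμ hpiece hpairs)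

end PermMonLattice

open PermMonLattice in
/-- every complete algebraic lattice with at most `2 ^ #λ` compact elements embeds
into the lattice of submonoids of the symmetric group `Equiv.Perm λ` via an injection preserving
all nonempty suprema and infima, which moreover sends the bottom element to the trivial
submonoid `⊥` (consisting only of the identity permutation). -/
theorem permMonLattice_universal (α : Type u) [Infinite α] (L : Type u) [CompleteLattice L]
    (halg : ∀ x : L, sSup {c : L | IsCompactElement c ∧ c ≤ x} = x)
    (hcard : Cardinal.mk {c : L // IsCompactElement c} ≤ 2 ^ Cardinal.mk α) :
    ∃ Φ : L → Submonoid (Equiv.Perm α),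
      Function.Injective Φ ∧
      (∀ S : Set L, S.Nonempty → Φ (sSup S) = sSup (Φ '' S)) ∧
      (∀ S : Set L, S.Nonempty → Φ (sInf S) = sInf (Φ '' S)) ∧
      Φ ⊥ = ⊥ := by
  have : IsCompactlyGenerated L := ⟨fun x => ⟨_, fun _ hc => hc.1, halg x⟩⟩
  have hℵ₀ : Cardinal.aleph0 ≤ 2 ^ Cardinal.mk α :=
    (Cardinal.aleph0_le_mk α).trans (Cardinal.cantor _).le
  obtain ⟨θ, hθ⟩ := exists_monoidHom_perm_injective (mk_coord_le hℵ₀ hcard)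
  refine ⟨fun t => (AddSubmonoid.toSubmonoid (psi t)).map θ, ?_, fun S _ => ?_, fun S hS => ?_,
    ?_⟩
  · exact (Submonoid.map_injective_of_injective hθ).comp
      (AddSubmonoid.toSubmonoid.injective.comp psi_injective)
  · dsimp only
    rw [psi_sSup, map_toSubmonoid_sSup, Set.image_image]
  · dsimp only
    rw [psi_sInf hS, map_toSubmonoid_sInf θ hθ (hS.image psi), Set.image_image]
  · dsimp only
    rw [psi_bot, OrderIso.map_bot, Submonoid.map_bot]
end

section
/- Let K be a complete algebraic lattice and let L be a nonempty subset of K that is closed under suprema and infima (computed in K) of all nonempty subsets of L. Then L, equipped with the order induced from K, is a complete lattice and is algebraic, i.e., every element of L is the supremum in L of the compact elements of L below it. -/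
/-- The December 2024 Mathlib definition of a compact element of a complete lattice
(since replaced in Mathlib by the root-level `IsCompactElement`, stated via directed sets). -/
def CompleteLattice.IsCompactElement {α : Type*} [CompleteLattice α] (k : α) :=
  ∀ s : Set α, k ≤ sSup s → ∃ t : Finset α, ↑t ⊆ s ∧ k ≤ t.sup id

/-!
Every `x ∈ L` is, in `K`, the join of the compact `k ≤ x`. Such a `k` lies below
`k̄ = sInf {y ∈ L | k ≤ y}`, the least element of `L` above it, and `k̄ ≤ x`. Nonempty joins of
elements of `L` are computed in `K`, so a directed family in `L` whose join is above `k̄` has a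
member above `k`, hence above `k̄`: `k̄` is compact in `L`. Thus `x` is the join in `L` of compact
elements of `L`.
-/

theorem CompleteLattice.isCompactElement_iff {α : Type*} [CompleteLattice α] (k : α) :
    IsCompactElement k ↔ _root_.IsCompactElement k :=
  (isCompactElement_iff_exists_le_sSup_of_le_sSup α k).symm

section Transfer

variable {α β : Type*}

theorem isCompactElement_of_isLeast_preimage_Ici [PartialOrder α] [PartialOrder β] (u : β →o α)
    (hu : ∀ (s : Set β) (a : β), s.Nonempty → DirectedOn (· ≤ ·) s → IsLUB s a →
      IsLUB (u '' s) (u a))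
    {k : α} (hk : IsCompactElement k) {c : β} (hc : IsLeast (u ⁻¹' Set.Ici k) c) :
    IsCompactElement c := by
  intro s a hs hdir ha hca
  obtain ⟨_, ⟨x, hx, rfl⟩, hkx⟩ := hk (u '' s) (u a) (hs.image u)
    (hdir.mono_comp fun _ _ h => u.monotone h) (hu s a hs hdir ha) (hc.1.trans (u.monotone hca))
  exact ⟨x, hx, hc.2 hkx⟩

theorem IsCompactlyGenerated.of_orderEmbedding [CompleteLattice α] [IsCompactlyGenerated α]
    [CompleteLattice β] (u : β ↪o α)
    (hu : ∀ (s : Set β) (a : β), s.Nonempty → DirectedOn (· ≤ ·) s → IsLUB s a →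
      IsLUB (u '' s) (u a))
    (hleast : ∀ (k : α) (x : β), IsCompactElement k → k ≤ u x →
      ∃ c, IsLeast (u ⁻¹' Set.Ici k) c) :
    IsCompactlyGenerated β := by
  refine ⟨fun x => ⟨{c | IsCompactElement c ∧ c ≤ x}, fun _ hc => hc.1, ?_⟩⟩
  refine le_antisymm (sSup_le fun _ hc => hc.2) ?_
  rw [← u.le_iff_le, ← sSup_compact_le_eq (u x)]
  refine sSup_le fun k ⟨hk, hkx⟩ => ?_
  obtain ⟨c, hc⟩ := hleast k x hk hkx
  have hc_compact := isCompactElement_of_isLeast_preimage_Ici u.toOrderHom hu hk hc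
  exact hc.1.trans (u.monotone (le_sSup ⟨hc_compact, hc.2 hkx⟩))

end Transfer

section ClosedSubset

variable {K : Type*} [CompleteLattice K] {L : Set K}

theorem exists_isLUB_of_sSup_mem (hbot : sInf L ∈ L)
    (hSup : ∀ S : Set K, S ⊆ L → S.Nonempty → sSup S ∈ L) (S : Set L) : ∃ a : L, IsLUB S a := by
  have hmem : sSup (insert (sInf L) (Subtype.val '' S)) ∈ L :=
    hSup _ (Set.insert_subset hbot (Set.image_subset_iff.2 fun a _ => a.2))
      (Set.insert_nonempty _ _)
  refine ⟨⟨_, hmem⟩, fun a ha => le_sSup (Set.mem_insert_of_mem _ ⟨a, ha, rfl⟩), fun b hb => ?_⟩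
  refine sSup_le ?_
  rintro _ (rfl | ⟨a, ha, rfl⟩)
  exacts [sInf_le b.2, hb ha]

theorem isLUB_image_val_of_sSup_mem (hSup : ∀ S : Set K, S ⊆ L → S.Nonempty → sSup S ∈ L)
    {S : Set L} (hS : S.Nonempty) {a : L} (ha : IsLUB S a) : IsLUB (Subtype.val '' S) (a : K) := by
  have hmem : sSup (Subtype.val '' S) ∈ L :=
    hSup _ (Set.image_subset_iff.2 fun b _ => b.2) (hS.image _)
  have hle : a ≤ ⟨_, hmem⟩ := ha.2 fun b hb => le_sSup ⟨b, hb, rfl⟩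
  rw [le_antisymm hle (sSup_le (Set.forall_mem_image.2 fun b hb => ha.1 hb))]
  exact isLUB_sSup _

theorem exists_isLeast_of_sInf_mem (hInf : ∀ S : Set K, S ⊆ L → S.Nonempty → sInf S ∈ L)
    {k : K} {x : L} (hkx : k ≤ x) : ∃ c : L, IsLeast {y : L | k ≤ y} c :=
  ⟨⟨_, hInf {y ∈ L | k ≤ y} (fun _ hy => hy.1) ⟨x, x.2, hkx⟩⟩,
    le_sInf fun _ hy => hy.2, fun y hy => sInf_le ⟨y.2, hy⟩⟩

end ClosedSubset

/-- a nonempty subset `L` of a complete algebraic lattice `K` that is closed under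
nonempty suprema and infima (computed in `K`) is, with the induced order, a complete lattice
which is again algebraic: every element is the supremum (in `L`) of the compact elements
(of `L`) below it. -/
theorem closedSublattice_isAlgebraic {K : Type u} [CompleteLattice K]
    (halgK : ∀ x : K, sSup {c : K | CompleteLattice.IsCompactElement c ∧ c ≤ x} = x)
    (L : Set K) (hne : L.Nonempty)
    (hSup : ∀ S : Set K, S ⊆ L → S.Nonempty → sSup S ∈ L)
    (hInf : ∀ S : Set K, S ⊆ L → S.Nonempty → sInf S ∈ L) :
    ∃ inst : CompleteLattice ↥L,
      (∀ a b : ↥L, inst.le a b ↔ (a : K) ≤ (b : K)) ∧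
      (∀ x : ↥L,
        inst.sSup {c : ↥L | @CompleteLattice.IsCompactElement ↥L inst c ∧ inst.le c x} = x) := by
  choose lub hlub using exists_isLUB_of_sSup_mem (hInf L le_rfl hne) hSup
  let : SupSet L := ⟨lub⟩
  let inst : CompleteLattice L := completeLatticeOfSup L hlub
  refine ⟨inst, fun _ _ => Iff.rfl, fun x => ?_⟩
  have : IsCompactlyGenerated K :=
    ⟨fun x => ⟨_, fun c hc => (CompleteLattice.isCompactElement_iff c).1 hc.1, halgK x⟩⟩
  have : IsCompactlyGenerated L := .of_orderEmbedding (OrderEmbedding.subtype L)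
    (fun _ _ hs _ ha => isLUB_image_val_of_sSup_mem hSup hs ha)
    (fun _ _ _ hkx => exists_isLeast_of_sInf_mem hInf hkx)
  simp_rw [CompleteLattice.isCompactElement_iff]
  exact sSup_compact_le_eq x
end

section
/- Let K be a complete algebraic lattice and let L be a nonempty subset of K closed under nonempty suprema and infima computed in K, regarded as a complete lattice with the induced order. For every compact element x of K that lies below some element of L, let x^L denote the smallest element of L above x (i.e., the infimum in K of {y ∈ L : x ≤ y}, which belongs to L). Then the compact elements of the complete lattice L are precisely the elements of the form x^L, where x ranges over the compact elements of K lying below some element of L. -/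
/-!
View `L` as a complete lattice order-embedded in `K` by `e`, with `x^L` the least `b` such that
`x ≤ e b`. If `x` is compact in `K`, then `x^L` is compact in `L`: a directed family in `L` whose
supremum lies above `x^L` has, since `e` preserves nonempty suprema, a directed image whose
supremum lies above `x`, so one of its members already lies above `x`, hence above `x^L`.
Conversely, if `a` is compact in `L`, the elements `c^L` with `c` compact and `c ≤ e a` form a
directed family (`c₁^L, c₂^L ≤ (c₁ ⊔ c₂)^L`) whose supremum lies above `a` because `K` is
algebraic; by compactness `a ≤ c^L ≤ a` for one of them.
-/

open Set

theorem isCompactElement_bot {α : Type*} [PartialOrder α] [OrderBot α] :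
    IsCompactElement (⊥ : α) :=
  fun _ _ ⟨x, hx⟩ _ _ _ => ⟨x, hx, bot_le⟩

theorem IsCompactElement.sup {α : Type*} [CompleteLattice α] {a b : α}
    (ha : IsCompactElement a) (hb : IsCompactElement b) : IsCompactElement (a ⊔ b) := by
  classical
  simpa using CompleteLattice.isCompactElement_finsetSup {a, b} (f := id) (by simp [ha, hb])

namespace OrderEmbedding

variable {α β : Type*} [CompleteLattice α] [CompleteLattice β] (e : α ↪o β)

theorem map_sSup_of_mem_range {S : Set α} (h : sSup (e '' S) ∈ range e) :
    e (sSup S) = sSup (e '' S) := by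
  obtain ⟨s, hs⟩ := h
  have hSs : sSup S ≤ s :=
    sSup_le fun b hb => e.le_iff_le.1 (hs ▸ le_sSup (mem_image_of_mem e hb))
  exact le_antisymm (hs ▸ e.monotone hSs)
    (sSup_le (forall_mem_image.2 fun _ hb => e.monotone (le_sSup hb)))

theorem isLeast_iff_map_eq_sInf {x : β} {a : α} :
    IsLeast {b | x ≤ e b} a ↔ e a = sInf (e '' {b | x ≤ e b}) := by
  refine ⟨fun ha => le_antisymm ?_ (sInf_le (mem_image_of_mem e ha.1)), fun ha => ⟨?_, ?_⟩⟩
  · exact le_sInf (forall_mem_image.2 fun b hb => e.monotone (ha.2 hb))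
  · change x ≤ e a
    exact ha ▸ le_sInf (forall_mem_image.2 fun _ hb => hb)
  · exact fun b hb => e.le_iff_le.1 (ha ▸ sInf_le (mem_image_of_mem e hb))

theorem isCompactElement_of_isLeast
    (he : ∀ S : Set α, S.Nonempty → e (sSup S) = sSup (e '' S))
    {x : β} (hx : IsCompactElement x) {a : α} (ha : IsLeast {b | x ≤ e b} a) :
    IsCompactElement a := by
  rw [CompleteLattice.isCompactElement_iff_le_of_directed_sSup_le] at hx ⊢
  intro S hS hdir haS
  have hxS : x ≤ sSup (e '' S) := he S hS ▸ ha.1.trans (e.monotone haS)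
  obtain ⟨_, ⟨b, hb, rfl⟩, hxb⟩ :=
    hx _ (hS.image e) (hdir.mono_comp fun _ _ h => e.monotone h) hxS
  exact ⟨b, hb, ha.2 hxb⟩

theorem exists_isLeast_of_isCompactElement
    (halg : ∀ y : β, sSup {c | IsCompactElement c ∧ c ≤ y} = y)
    (hcl : ∀ c, (∃ b, c ≤ e b) → ∃ b, IsLeast {b' | c ≤ e b'} b)
    {a : α} (ha : IsCompactElement a) :
    ∃ x, IsCompactElement x ∧ IsLeast {b | x ≤ e b} a := by
  set S := {b | ∃ c, IsCompactElement c ∧ c ≤ e a ∧ IsLeast {b' | c ≤ e b'} b}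
  have hmem : ∀ c, IsCompactElement c → c ≤ e a → ∃ b ∈ S, c ≤ e b := fun c hc hca =>
    let ⟨b, hb⟩ := hcl c ⟨a, hca⟩
    ⟨b, ⟨c, hc, hca, hb⟩, hb.1⟩
  have hne : S.Nonempty :=
    let ⟨b, hb, _⟩ := hmem ⊥ isCompactElement_bot bot_le
    ⟨b, hb⟩
  have hdir : DirectedOn (· ≤ ·) S := by
    rintro b₁ ⟨c₁, hc₁, hca₁, hb₁⟩ b₂ ⟨c₂, hc₂, hca₂, hb₂⟩
    obtain ⟨b, hbS, hcb⟩ := hmem (c₁ ⊔ c₂) (hc₁.sup hc₂) (sup_le hca₁ hca₂)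
    exact ⟨b, hbS, hb₁.2 (le_sup_left.trans hcb), hb₂.2 (le_sup_right.trans hcb)⟩
  have haS : a ≤ sSup S := by
    rw [← e.le_iff_le, ← halg (e a)]
    refine sSup_le ?_
    rintro c ⟨hc, hca⟩
    obtain ⟨b, hbS, hcb⟩ := hmem c hc hca
    exact hcb.trans (e.monotone (le_sSup hbS))
  obtain ⟨b, ⟨c, hc, hca, hb⟩, hab⟩ :=
    (CompleteLattice.isCompactElement_iff_le_of_directed_sSup_le _ a).1 ha S hne hdir haS
  rw [← le_antisymm hab (hb.2 hca)] at hb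
  exact ⟨c, hc, hb⟩

end OrderEmbedding

theorem closedSublattice_compact_iff_general {K : Type u} [CompleteLattice K]
    (halgK : ∀ x : K, sSup {c : K | IsCompactElement c ∧ c ≤ x} = x)
    (L : Set K)
    (hSup : ∀ S : Set K, S ⊆ L → S.Nonempty → sSup S ∈ L)
    (hInf : ∀ S : Set K, S ⊆ L → S.Nonempty → sInf S ∈ L)
    (inst : CompleteLattice ↥L)
    (hord : ∀ a b : ↥L, inst.le a b ↔ (a : K) ≤ (b : K)) :
    ∀ a : ↥L, @IsCompactElement ↥L inst.toPartialOrder a ↔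
      ∃ x : K, IsCompactElement x ∧ (∃ y ∈ L, x ≤ y) ∧
        (a : K) = sInf {y : K | y ∈ L ∧ x ≤ y} := by
  let _ : CompleteLattice L := inst
  -- `↥L` also carries the order induced by `Subtype`; `e` must use the order of `inst`.
  let e :=
    @OrderEmbedding.ofMapLEIff L K inst.toPartialOrder _ Subtype.val fun a b => (hord a b).symm
  have himage (x : K) : e '' {b | x ≤ e b} = {y | y ∈ L ∧ x ≤ y} := by
    ext y; simp [e, and_comm]
  intro a
  constructor
  · intro ha
    obtain ⟨x, hx, hxa⟩ := e.exists_isLeast_of_isCompactElement halgK (fun c ⟨b, hcb⟩ =>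
      ⟨⟨sInf {y | y ∈ L ∧ c ≤ y}, hInf _ (fun _ hy => hy.1) ⟨b, b.2, hcb⟩⟩,
        e.isLeast_iff_map_eq_sInf.2 (by rw [himage]; rfl)⟩) ha
    exact ⟨x, hx, ⟨a, a.2, hxa.1⟩, himage x ▸ e.isLeast_iff_map_eq_sInf.1 hxa⟩
  · rintro ⟨x, hx, -, hax⟩
    refine e.isCompactElement_of_isLeast (fun S hS => e.map_sSup_of_mem_range ?_) hx
      (e.isLeast_iff_map_eq_sInf.2 (himage x ▸ hax))
    exact ⟨⟨_, hSup _ (image_subset_iff.2 fun b _ => b.2) (hS.image e)⟩, rfl⟩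

/-- let `L` be a nonempty subset of a complete algebraic lattice `K`, closed under
nonempty suprema and infima computed in `K`, regarded as a complete lattice with the induced
order. For a compact element `x` of `K` lying below some element of `L`, the element
`x^L := sInf {y ∈ L | x ≤ y}` is the smallest element of `L` above `x`. The compact elements of
`L` are precisely the elements of the form `x^L`. -/
theorem closedSublattice_compact_iff {K : Type u} [CompleteLattice K]
    (halgK : ∀ x : K, sSup {c : K | IsCompactElement c ∧ c ≤ x} = x)
    (L : Set K) (hne : L.Nonempty)
    (hSup : ∀ S : Set K, S ⊆ L → S.Nonempty → sSup S ∈ L)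
    (hInf : ∀ S : Set K, S ⊆ L → S.Nonempty → sInf S ∈ L)
    (inst : CompleteLattice ↥L)
    (hord : ∀ a b : ↥L, inst.le a b ↔ (a : K) ≤ (b : K)) :
    ∀ a : ↥L, @IsCompactElement ↥L inst.toPartialOrder a ↔
      ∃ x : K, IsCompactElement x ∧ (∃ y ∈ L, x ≤ y) ∧
        (a : K) = sInf {y : K | y ∈ L ∧ x ≤ y} :=
  closedSublattice_compact_iff_general halgK L hSup hInf inst hord
end

section
/- Let λ be an infinite type and let κ = 2^#λ. Then there exists a 2^#λ-branching independent composition engine on λ, i.e., a family {f_{(η,φ)} : (η,φ) ∈ Λ_κ} of permutations of λ indexed by Λ_κ satisfying: (i) for all (η,φ) ∈ Λ_κ and all α ∈ κ, f_{(η,φ)} = f_{(η*α, φ*0)} ∘ f_{(η*α, φ*1)}; (ii) for all a, b ∈ Λ_κ, f_a ∘ f_b = f_b ∘ f_a; (iii) whenever P and Q are reduced finite lists of elements of Λ_κ (possibly empty) that are not permutations of each other, the composites t_P and t_Q are distinct functions (the composite of the empty list being the identity). -/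
/-- `Λ_κ`: the set of pairs `(η, φ)` of sequences of equal finite length `n ≥ 1` with entries
in `I` (a type of cardinality `κ`) and in `2` respectively, coded as nonempty lists of pairs. -/
abbrev Lam (I : Type u) : Type u := {l : List (I × Bool) // l ≠ []}

/-- `(η * a, φ * b)`: extension of the pair of sequences `p` by the entries `a` and `b`. -/
def Lam.ext {I : Type u} (p : Lam I) (a : I) (b : Bool) : Lam I :=
  ⟨p.val ++ [(a, b)], by simp⟩

/-- A finite list of elements of `Λ_κ` is reduced iff it does not contain both
`(η * a, φ * 0)` and `(η * a, φ * 1)` for any `(η, φ) ∈ Λ_κ` and `a`. -/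
def Reduced {I : Type u} (P : List (Lam I)) : Prop :=
  ¬ ∃ (p : Lam I) (a : I), Lam.ext p a false ∈ P ∧ Lam.ext p a true ∈ P

/-!
A sequence of length one or ending in `1` is sent to a free generator of a free abelian group,
a longer one ending in `0` to the image of its parent minus that of its sibling ending in `1`;
this makes (i) hold by definition and (ii) automatic. Reduced lists are recovered from their
sums: for a longest entry `p`, the coefficient of `p` with its last bit set to `1` counts the
copies of that sequence minus those of its sibling ending in `0`, and a reduced list never
contains both, so the sign and size of the coefficient show which sibling occurs and how often;
remove it and induct. The free abelian group of rank `2 ^ #λ` embeds in the `ℚ`-vector space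
`λ → ℚ`, which acts faithfully on `λ × ℚ ≃ λ` by translating each fibre.
-/

open Cardinal

def translationHom (β : Type*) : Multiplicative (β → ℚ) →* Equiv.Perm (β × ℚ) where
  toFun v := (Equiv.refl β).prodShear fun x => Equiv.addRight (v.toAdd x)
  map_one' := by ext <;> simp
  map_mul' v w := by ext <;> simp [add_right_comm]

theorem translationHom_injective (β : Type*) : Function.Injective (translationHom β) := by
  intro v w h
  apply Multiplicative.toAdd.injective
  funext x
  simpa [translationHom] using congrArg (fun σ : Equiv.Perm (β × ℚ) => (σ (x, 0)).2) h

theorem exists_injective_addMonoidHom_finsupp_int {ι α : Type u} [Infinite α]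
    (h : #ι ≤ 2 ^ #α) : ∃ g : (ι →₀ ℤ) →+ (α → ℚ), Function.Injective g := by
  let b := Module.Basis.ofVectorSpace ℚ (α → ℚ)
  have hrank : #ι ≤ #(Module.Basis.ofVectorSpaceIndex ℚ (α → ℚ)) := by
    rw [b.mk_eq_rank'', rank_fun_infinite, mk_arrow, Cardinal.mkRat]
    simpa using h.trans (power_le_power_right ofNat_le_aleph0)
  obtain ⟨e⟩ := (Cardinal.le_def _ _).1 hrank
  have hli : LinearIndependent ℤ (b ∘ e) :=
    (b.linearIndependent.comp e e.injective).restrict_scalars' ℤ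
  exact ⟨(Finsupp.linearCombination ℤ (b ∘ e)).toAddMonoidHom, hli⟩

theorem exists_injective_monoidHom_finsupp_int_perm {ι α : Type u} [Infinite α]
    (h : #ι ≤ 2 ^ #α) :
    ∃ Φ : Multiplicative (ι →₀ ℤ) →* Equiv.Perm α, Function.Injective Φ := by
  obtain ⟨g, hg⟩ := exists_injective_addMonoidHom_finsupp_int h
  obtain ⟨e⟩ : Nonempty (α × ℚ ≃ α) := Cardinal.eq.1 (by simp)
  refine ⟨e.permCongrHom.toMonoidHom.comp
    ((translationHom α).comp (AddMonoidHom.toMultiplicative g)), ?_⟩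
  exact e.permCongrHom.injective.comp ((translationHom_injective α).comp hg)

namespace Lam

variable {I : Type u}

-- Argument and keys are sequences written backwards, so that the last entry is the head.
noncomputable def revCode : List (I × Bool) → (List (I × Bool) →₀ ℤ)
  | [] => 0
  | [x] => Finsupp.single [x] 1
  | (a, true) :: x :: r => Finsupp.single ((a, true) :: x :: r) 1
  | (a, false) :: x :: r => revCode (x :: r) - Finsupp.single ((a, true) :: x :: r) 1

theorem revCode_apply_of_length_lt {r K : List (I × Bool)} (h : r.length < K.length) :
    revCode r K = 0 := by
  fun_induction revCode r with
  | case1 => rfl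
  | case2 x => exact Finsupp.single_eq_of_ne (by rintro rfl; simp at h)
  | case3 a x r => exact Finsupp.single_eq_of_ne (by rintro rfl; simp at h)
  | case4 a x r ih =>
    simp only [List.length_cons] at h ih
    rw [Finsupp.sub_apply, ih (by omega),
      Finsupp.single_eq_of_ne (by rintro rfl; simp at h), sub_zero]

noncomputable def code (p : Lam I) : List (I × Bool) →₀ ℤ := revCode p.val.reverse

theorem one_le_length (p : Lam I) : 1 ≤ p.val.length := List.length_pos_iff.2 p.prop

theorem reverse_ext (p : Lam I) (a : I) (b : Bool) :
    (p.ext a b).val.reverse = (a, b) :: p.val.reverse := by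
  simp [Lam.ext]

theorem exists_eq_ext {p : Lam I} (h : 2 ≤ p.val.length) :
    ∃ (w : Lam I) (a : I) (b : Bool), p = w.ext a b := by
  obtain ⟨l, ⟨a, b⟩, hl⟩ := (List.eq_nil_or_concat p.val).resolve_left p.prop
  have hl' : l ≠ [] := by rintro rfl; simp [hl] at h
  exact ⟨⟨l, hl'⟩, a, b, Subtype.ext (by simp [Lam.ext, hl])⟩

theorem code_ext_false_add_code_ext_true (p : Lam I) (a : I) :
    (p.ext a false).code + (p.ext a true).code = p.code := by
  obtain ⟨x, r, hxr⟩ := List.exists_cons_of_ne_nil (List.reverse_ne_nil_iff.2 p.prop)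
  simp [code, reverse_ext, hxr, revCode]

section DecidableEq

variable [DecidableEq I]

theorem revCode_apply_cons_true {s r : List (I × Bool)} (a : I) (hr : r ≠ [])
    (hs : s.length ≤ r.length + 1) :
    revCode s ((a, true) :: r) =
      (if s = (a, true) :: r then 1 else 0) - (if s = (a, false) :: r then 1 else 0) := by
  match s, hs with
  | [], _ => simp [revCode]
  | [y], _ => simp [revCode, hr]
  | (b, true) :: y :: t, _ => simp [revCode, Finsupp.single_apply]
  | (b, false) :: y :: t, hs =>
    have : (y :: t).length < ((a, true) :: r).length := by simp only [List.length_cons] at hs ⊢; omega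
    simp [revCode, Finsupp.single_apply, revCode_apply_of_length_lt this]

theorem revCode_apply_singleton {s : List (I × Bool)} (x : I × Bool) (hs : s.length ≤ 1) :
    revCode s [x] = if s = [x] then 1 else 0 := by
  match s, hs with
  | [], _ => simp [revCode]
  | [y], _ => simp [revCode, Finsupp.single_apply]

theorem code_apply_ext_true {q w : Lam I} (a : I) (hq : q.val.length ≤ w.val.length + 1) :
    q.code (w.ext a true).val.reverse =
      (if q = w.ext a true then 1 else 0) - (if q = w.ext a false then 1 else 0) := by
  rw [code, reverse_ext, revCode_apply_cons_true a (List.reverse_ne_nil_iff.2 w.prop) (by simpa)]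
  simp [Subtype.ext_iff, Lam.ext, List.reverse_eq_cons_iff]

theorem code_apply_of_length_eq_one {q p : Lam I} (hq : q.val.length = 1)
    (hp : p.val.length = 1) : q.code p.val.reverse = if q = p then 1 else 0 := by
  obtain ⟨x, hx⟩ := List.length_eq_one_iff.1 hp
  rw [code, hx, List.reverse_singleton, revCode_apply_singleton x (by simp [hq])]
  simp [Subtype.ext_iff, hx, List.reverse_eq_cons_iff]

theorem sum_code_apply_ext_true {P : List (Lam I)} {w : Lam I} (a : I)
    (hP : ∀ q ∈ P, q.val.length ≤ w.val.length + 1) :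
    (P.map code).sum (w.ext a true).val.reverse =
      P.count (w.ext a true) - P.count (w.ext a false) := by
  induction P with
  | nil => simp
  | cons q P ih =>
    simp only [List.forall_mem_cons] at hP
    simp only [List.map_cons, List.sum_cons, Finsupp.add_apply, code_apply_ext_true a hP.1,
      ih hP.2, List.count_cons, beq_iff_eq]
    split_ifs <;> omega

theorem sum_code_apply_of_length_eq_one {P : List (Lam I)} {p : Lam I}
    (hP : ∀ q ∈ P, q.val.length = 1) (hp : p.val.length = 1) :
    (P.map code).sum p.val.reverse = P.count p := by
  induction P with
  | nil => simp
  | cons q P ih =>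
    simp only [List.forall_mem_cons] at hP
    simp only [List.map_cons, List.sum_cons, Finsupp.add_apply,
      code_apply_of_length_eq_one hP.1 hp, ih hP.2, List.count_cons, beq_iff_eq]
    split_ifs <;> omega

end DecidableEq

end Lam

theorem Reduced.of_subset {I : Type u} {P Q : List (Lam I)} (hQ : Reduced Q) (h : P ⊆ Q) :
    Reduced P :=
  fun ⟨p, a, h0, h1⟩ => hQ ⟨p, a, h h0, h h1⟩

theorem Reduced.count_eq_zero_or {I : Type u} [DecidableEq I] {P : List (Lam I)}
    (hP : Reduced P) (w : Lam I) (a : I) :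
    P.count (w.ext a false) = 0 ∨ P.count (w.ext a true) = 0 := by
  simp only [List.count_eq_zero]
  by_contra! h
  exact hP ⟨w, a, h.1, h.2⟩

namespace Lam

variable {I : Type u}

theorem mem_of_sum_code_eq {P Q : List (Lam I)} (hP : Reduced P) (hQ : Reduced Q)
    (hsum : (P.map code).sum = (Q.map code).sum) {p : Lam I} (hp : p ∈ P)
    (hmax : ∀ q ∈ P ++ Q, q.val.length ≤ p.val.length) : p ∈ Q := by
  classical
  have hpP := List.count_pos_iff.2 hp
  rw [← List.count_pos_iff]
  rcases (one_le_length p).eq_or_lt with h1 | h2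
  · have hone : ∀ q ∈ P ++ Q, q.val.length = 1 := fun q hq =>
      le_antisymm (h1 ▸ hmax q hq) (one_le_length q)
    rw [List.forall_mem_append] at hone
    have := congrArg (· p.val.reverse) hsum
    simp only [sum_code_apply_of_length_eq_one hone.1 h1.symm,
      sum_code_apply_of_length_eq_one hone.2 h1.symm] at this
    omega
  · obtain ⟨w, a, v, rfl⟩ := exists_eq_ext h2
    have hlen : ∀ q ∈ P ++ Q, q.val.length ≤ w.val.length + 1 := by simpa [Lam.ext] using hmax
    rw [List.forall_mem_append] at hlen
    have := congrArg (· (w.ext a true).val.reverse) hsum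
    simp only [sum_code_apply_ext_true a hlen.1, sum_code_apply_ext_true a hlen.2] at this
    rcases hP.count_eq_zero_or w a with hP0 | hP0 <;>
      rcases hQ.count_eq_zero_or w a with hQ0 | hQ0 <;> cases v <;> omega

theorem perm_of_sum_code_eq {P Q : List (Lam I)} (hP : Reduced P) (hQ : Reduced Q)
    (hsum : (P.map code).sum = (Q.map code).sum) : P.Perm Q := by
  classical
  by_cases hnil : P ++ Q = []
  · obtain ⟨rfl, rfl⟩ := List.append_eq_nil_iff.1 hnil
    rfl
  obtain ⟨p, hp, hmax⟩ := (P ++ Q).toFinset.exists_max_image (fun q => q.val.length)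
    (List.toFinset_nonempty_iff _ |>.2 hnil)
  simp only [List.mem_toFinset] at hp hmax
  have hpPQ : p ∈ P ∧ p ∈ Q := by
    rcases List.mem_append.1 hp with hpP | hpQ
    · exact ⟨hpP, mem_of_sum_code_eq hP hQ hsum hpP hmax⟩
    · exact ⟨mem_of_sum_code_eq hQ hP hsum.symm hpQ fun q hq =>
        hmax q (List.perm_append_comm.subset hq), hpQ⟩
  have hsum_erase : ((P.erase p).map code).sum = ((Q.erase p).map code).sum := by
    have hP' := ((List.perm_cons_erase hpPQ.1).map code).sum_eq
    have hQ' := ((List.perm_cons_erase hpPQ.2).map code).sum_eq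
    simp only [List.map_cons, List.sum_cons] at hP' hQ'
    exact add_left_cancel (hP'.symm.trans (hsum.trans hQ'))
  have hshorter : (P.erase p).length + (Q.erase p).length < P.length + Q.length := by
    rw [List.length_erase_of_mem hpPQ.1, List.length_erase_of_mem hpPQ.2]
    have := List.length_pos_of_mem hpPQ.1
    omega
  have hperm := perm_of_sum_code_eq (hP.of_subset List.erase_subset)
    (hQ.of_subset List.erase_subset) hsum_erase
  exact (List.perm_cons_erase hpPQ.1).trans
    ((hperm.cons p).trans (List.perm_cons_erase hpPQ.2).symm)
termination_by P.length + Q.length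

end Lam

/-- there exists a `2 ^ #λ`-branching independent composition engine on an infinite
`λ`: a family of permutations `f_p` (`p ∈ Λ_κ`, `κ = 2 ^ #λ`) such that (i)
`f_(η,φ) = f_(η*a,φ*0) ∘ f_(η*a,φ*1)`, (ii) all `f_p` commute, and (iii) composites of reduced
lists that are not permutations of each other are distinct. -/
theorem exists_ICE (α : Type u) [Infinite α] (I : Type u)
    (hI : Cardinal.mk I = 2 ^ Cardinal.mk α) :
    ∃ f : Lam I → Equiv.Perm α,
      (∀ (p : Lam I) (a : I), f p = f (Lam.ext p a false) * f (Lam.ext p a true)) ∧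
      (∀ p q : Lam I, f p * f q = f q * f p) ∧
      (∀ P Q : List (Lam I), Reduced P → Reduced Q → ¬ P.Perm Q →
        (P.map f).prod ≠ (Q.map f).prod) := by
  have : Infinite I := Cardinal.infinite_iff.2 (hI ▸ (aleph0_le_mk α).trans (cantor _).le)
  have hcard : #(List (I × Bool)) ≤ 2 ^ #α := by
    simp only [mk_list_eq_mk, mk_prod, lift_uzero, mk_fintype, Fintype.card_bool,
      Nat.cast_ofNat, lift_ofNat, ← hI]
    exact (mul_eq_left (aleph0_le_mk I) (ofNat_le_aleph0.trans (aleph0_le_mk I))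
      two_ne_zero).le
  obtain ⟨Φ, hΦ⟩ := exists_injective_monoidHom_finsupp_int_perm hcard
  refine ⟨fun p => Φ (.ofAdd p.code), fun p a => ?_, fun p q => ?_,
    fun P Q hP hQ hPQ h => hPQ ?_⟩
  · dsimp only
    rw [← Lam.code_ext_false_add_code_ext_true p a, ofAdd_add, map_mul]
  · rw [← map_mul, mul_comm, map_mul]
  · refine Lam.perm_of_sum_code_eq hP hQ (Multiplicative.ofAdd.injective (hΦ ?_))
    simpa [map_list_prod, ofAdd_list_prod, Function.comp_def] using h
end

section
/- Let λ be an infinite type, let κ = 2^#λ, and let {f_{(η,φ)} : (η,φ) ∈ Λ_κ} be a κ-branching independent composition engine on λ. Let L be a complete algebraic lattice, let C be the set of compact elements of L other than the smallest element, and let c : Λ_κ → C be a surjective enumeration satisfying: (1) every element of C equals c_{(⟨α⟩,⟨0⟩)} for some α < κ; (2) for all (η,φ) ∈ Λ_κ and α < κ, c_{(η,φ)} ≤ c_{(η*α, φ*0)} ∨ c_{(η*α, φ*1)}; (3) for all (η,φ) ∈ Λ_κ and all d, d' ∈ C with c_{(η,φ)} ≤ d ∨ d', there exists α < κ with d = c_{(η*α,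 φ*0)} and d' = c_{(η*α, φ*1)}. For an ideal I of the join-semilattice (C, ∨), let F(I) denote the submonoid of λ^λ generated by {f_{(η,φ)} : c_{(η,φ)} ∈ I}. Then for every nonempty family {I_u : u ∈ U} of ideals of (C, ∨): the join of the submonoids F(I_u) (in the lattice of submonoids of λ^λ) equals F(⋁_{u∈U} I_u), where ⋁_{u∈U} I_u is the smallest ideal of (C,∨) containing all I_u. -/
/-- An ideal of the join-semilattice `(C, ∨)`: a (possibly empty) subset of `C` which is
downward closed in `C` and closed under finite joins. -/
def IsIdealIn {L : Type v} [CompleteLattice L] (C J : Set L) : Prop :=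
  J ⊆ C ∧ (∀ x ∈ J, ∀ y ∈ C, y ≤ x → y ∈ J) ∧ (∀ x ∈ J, ∀ y ∈ J, x ⊔ y ∈ J)

/-- `F(J)`: the submonoid of `λ → λ` (under composition) generated by the functions `f_p` for
those indices `p` with `c_p ∈ J`. -/
def Fmon {α : Type u} {I : Type u} {L : Type v} [CompleteLattice L]
    (f : Lam I → Equiv.Perm α) (c : Lam I → L) (J : Set L) : Submonoid (Function.End α) :=
  Submonoid.closure {g : Function.End α | ∃ p : Lam I, c p ∈ J ∧ g = ⇑(f p)}

/-- The join of a family of ideals of `(C, ∨)`: the set of all `x ∈ C` below some finite join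
`c₁ ⊔ ⋯ ⊔ cₙ` of elements of the union of the family. -/
def idealJoin {L : Type v} [CompleteLattice L] (C : Set L) {U : Type w} (J : U → Set L) :
    Set L :=
  {x | x ∈ C ∧ ∃ l : List L, l ≠ [] ∧ (∀ y ∈ l, ∃ u, y ∈ J u) ∧ x ≤ l.foldr (· ⊔ ·) ⊥}

/-!
Only the direction `F(⋁ J u) ≤ ⨆ F(J u)` needs an argument. Fix a submonoid `M` and call
`y ∈ C` *covered* if `f p ∈ M` whenever `c p ≤ y`. For `p = (η, φ)`, property (3) turns `c p ≤ y ⊔ z` into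
`y = c (η * a, φ * 0)`, `z = c (η * a, φ * 1)`, and then `f p` is the product of the two
corresponding generators by (i); so covered elements are closed under `⊔`. Taking
`M = ⨆ F(J u)`, every element of every `J u` is covered (ideals are downward closed), hence so is
every finite join of them, which is exactly what membership in `⋁ J u` provides.
-/

theorem supClosed_isCompactElement_ne_bot (L : Type*) [CompleteLattice L] :
    SupClosed {x : L | IsCompactElement x ∧ x ≠ ⊥} := by
  rintro a ⟨ha, ha_ne⟩ b ⟨hb, -⟩
  refine ⟨?_, fun h => ha_ne (sup_eq_bot_iff.mp h).1⟩
  classical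
  simpa using CompleteLattice.isCompactElement_finsetSup {a, b} (f := id) (by simp [ha, hb])

theorem SupClosed.foldr_sup_mem {L : Type*} [Lattice L] [OrderBot L] {S : Set L}
    (hS : SupClosed S) {l : List L} (hl : l ≠ []) (hlS : ∀ y ∈ l, y ∈ S) :
    l.foldr (· ⊔ ·) ⊥ ∈ S := by
  classical
  rw [List.foldr_sup_eq_sup_toFinset]
  exact hS.finsetSup_mem (List.toFinset_nonempty_iff l |>.mpr hl) (by simpa using hlS)

section Fmon

variable {α I : Type u} {L : Type v} [CompleteLattice L]
  {f : Lam I → Equiv.Perm α} {c : Lam I → L} {C : Set L}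

theorem Fmon_mono {J J' : Set L} (h : J ⊆ J') : Fmon f c J ≤ Fmon f c J' :=
  Submonoid.closure_mono fun _ ⟨p, hp, hg⟩ => ⟨p, h hp, hg⟩

theorem Fmon_le_iff {J : Set L} {M : Submonoid (Function.End α)} :
    Fmon f c J ≤ M ↔ ∀ p, c p ∈ J → (⇑(f p) : Function.End α) ∈ M := by
  refine Submonoid.closure_le.trans ⟨fun h p hp => h ⟨p, hp, rfl⟩, ?_⟩
  rintro h _ ⟨p, hp, rfl⟩
  exact h p hp

theorem supClosed_setOf_covered (hC : SupClosed C)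
    (hf1 : ∀ (p : Lam I) (a : I), f p = f (Lam.ext p a false) * f (Lam.ext p a true))
    (h3 : ∀ p : Lam I, ∀ d ∈ C, ∀ d' ∈ C, c p ≤ d ⊔ d' →
      ∃ a : I, d = c (Lam.ext p a false) ∧ d' = c (Lam.ext p a true))
    (M : Submonoid (Function.End α)) :
    SupClosed {y | y ∈ C ∧ ∀ p, c p ≤ y → (⇑(f p) : Function.End α) ∈ M} := by
  rintro y ⟨hyC, hy⟩ z ⟨hzC, hz⟩
  refine ⟨hC hyC hzC, fun p hp => ?_⟩
  obtain ⟨a, rfl, rfl⟩ := h3 p _ hyC _ hzC hp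
  have hmul := M.mul_mem (hy _ le_rfl) (hz _ le_rfl)
  rwa [hf1 p a]

theorem subset_idealJoin {U : Type w} {J : U → Set L} (hJC : ∀ u, J u ⊆ C) (u : U) :
    J u ⊆ idealJoin C J :=
  fun x hx => ⟨hJC u hx, [x], by simp, by simpa using ⟨u, hx⟩, by simp⟩

theorem Fmon_idealJoin_le_iSup (hC : SupClosed C) (hcC : ∀ p, c p ∈ C)
    (hf1 : ∀ (p : Lam I) (a : I), f p = f (Lam.ext p a false) * f (Lam.ext p a true))
    (h3 : ∀ p : Lam I, ∀ d ∈ C, ∀ d' ∈ C, c p ≤ d ⊔ d' →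
      ∃ a : I, d = c (Lam.ext p a false) ∧ d' = c (Lam.ext p a true))
    {U : Type w} {J : U → Set L} (hJ : ∀ u, IsIdealIn C (J u)) :
    Fmon f c (idealJoin C J) ≤ ⨆ u, Fmon f c (J u) := by
  refine Fmon_le_iff.mpr fun p ⟨_, l, hl, hlJ, hpl⟩ => ?_
  have hcovered : ∀ y ∈ l, y ∈ C ∧
      ∀ q, c q ≤ y → (⇑(f q) : Function.End α) ∈ ⨆ u, Fmon f c (J u) := by
    intro y hy
    obtain ⟨u, hyu⟩ := hlJ y hy
    refine ⟨(hJ u).1 hyu, fun q hq => ?_⟩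
    have hqu : c q ∈ J u := (hJ u).2.1 y hyu (c q) (hcC q) hq
    exact le_iSup (fun u => Fmon f c (J u)) u (Fmon_le_iff.mp le_rfl q hqu)
  exact ((supClosed_setOf_covered hC hf1 h3 _).foldr_sup_mem hl hcovered).2 p hpl

end Fmon

/-- given a `κ`-ICE `f` on an infinite `λ` (`κ = 2 ^ #λ`) and an enumeration `c` of
the nonbottom compact elements `C` of a complete algebraic lattice `L` with properties (1)–(3),
for every nonempty family of ideals `J u` of `(C, ∨)` the join of the submonoids `F(J u)` is
`F(⋁_u J u)`. -/
theorem sSup_Fmon (α : Type u) (I : Type u)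
    (f : Lam I → Equiv.Perm α)
    (hf1 : ∀ (p : Lam I) (a : I), f p = f (Lam.ext p a false) * f (Lam.ext p a true))
    (L : Type v) [CompleteLattice L]
    (C : Set L) (hC : C = {x : L | IsCompactElement x ∧ x ≠ ⊥})
    (c : Lam I → L)
    (hcC : ∀ p, c p ∈ C)
    (h3 : ∀ p : Lam I, ∀ d ∈ C, ∀ d' ∈ C, c p ≤ d ⊔ d' →
      ∃ a : I, d = c (Lam.ext p a false) ∧ d' = c (Lam.ext p a true))
    (U : Type w) (J : U → Set L) (hJ : ∀ u, IsIdealIn C (J u)) :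
    (⨆ u, Fmon f c (J u)) = Fmon f c (idealJoin C J) := by
  have hCsup : SupClosed C := hC ▸ supClosed_isCompactElement_ne_bot L
  exact le_antisymm
    (iSup_le fun u => Fmon_mono (subset_idealJoin (fun u => (hJ u).1) u))
    (Fmon_idealJoin_le_iSup hCsup hcC hf1 h3 hJ)
end

section
/- Let λ be an infinite type, let κ = 2^#λ, and let {f_{(η,φ)} : (η,φ) ∈ Λ_κ} be a κ-branching independent composition engine on λ. Let L be a complete algebraic lattice, let C be the set of compact elements of L other than the smallest element, and let c : Λ_κ → C be a surjective enumeration satisfying: (1) every element of C equals c_{(⟨α⟩,⟨0⟩)} for some α < κ; (2) for all (η,φ) ∈ Λ_κ and α < κ, c_{(η,φ)} ≤ c_{(η*α, φ*0)} ∨ c_{(η*α, φ*1)}; (3) for all (η,φ) ∈ Λ_κ and all d, d' ∈ C with c_{(η,φ)} ≤ d ∨ d', there exists α < κ with d = c_{(η*α, φ*0)} and d' = c_{(η*α, φ*1)}. For an ideal I of the join-semilattice (C, ∨), let F(I) denote the submonoid of λ^λ generated by {f_{(η,φ)} : c_{(η,φ)} ∈ I}. Then for every nonempty family {I_u : u ∈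 U} of ideals of (C, ∨): ⋂_{u∈U} F(I_u) = F(⋂_{u∈U} I_u). -/
/-! Every element of `F(J)` is a product of generators `f p` with `c p ∈ J`. By (i) and (2), two
factors `f (p.ext a false)` and `f (p.ext a true)` merge into the single factor `f p`, and `c p`
stays in the ideal `J`; repeating this gives a reduced representation. By (iii) a reduced
representation is unique up to order, so an element of every `F(J u)` has one reduced
representation, and its indices lie in every `J u`. -/

variable {I : Type u}

lemma Lam.ext_false_ne_ext_true (p : Lam I) (a : I) : p.ext a false ≠ p.ext a true := by
  simp [Lam.ext]

def MergeClosed (S : Set (Lam I)) : Prop :=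
  ∀ (p : Lam I) (a : I), p.ext a false ∈ S → p.ext a true ∈ S → p ∈ S

lemma IsIdealIn.mergeClosed_preimage {L : Type v} [CompleteLattice L] {C J : Set L}
    (hJ : IsIdealIn C J) {c : Lam I → L} (hcC : ∀ p, c p ∈ C)
    (h2 : ∀ (p : Lam I) (a : I), c p ≤ c (p.ext a false) ⊔ c (p.ext a true)) :
    MergeClosed (c ⁻¹' J) :=
  fun p a h0 h1 => hJ.2.1 _ (hJ.2.2 _ h0 _ h1) _ (hcC p) (h2 p a)

section Reduction

variable {M : Type*} [Monoid M] {f : Lam I → M} {S : Set (Lam I)}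

lemma exists_shorter_of_not_reduced (hS : MergeClosed S)
    (hf1 : ∀ (p : Lam I) (a : I), f p = f (p.ext a false) * f (p.ext a true))
    (hf2 : ∀ p q : Lam I, Commute (f p) (f q))
    {P : List (Lam I)} (hP : ∀ q ∈ P, q ∈ S) (hred : ¬ Reduced P) :
    ∃ P' : List (Lam I), P'.length < P.length ∧ (∀ q ∈ P', q ∈ S) ∧
      (P'.map f).prod = (P.map f).prod := by
  classical
  obtain ⟨p, a, h0, h1⟩ := not_not.mp hred
  set R := (P.erase (p.ext a false)).erase (p.ext a true)
  have hperm : P.Perm (p.ext a false :: p.ext a true :: R) :=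
    (List.perm_cons_erase h0).trans <| .cons _ <| List.perm_cons_erase <|
      (List.mem_erase_of_ne (Lam.ext_false_ne_ext_true p a).symm).mpr h1
  refine ⟨p :: R, by simp [hperm.length_eq], ?_, ?_⟩
  · rintro q (_ | ⟨_, hq⟩)
    · exact hS p a (hP _ h0) (hP _ h1)
    · exact hP q (List.mem_of_mem_erase (List.mem_of_mem_erase hq))
  · rw [(hperm.map f).prod_eq' (List.pairwise_map.2 (List.pairwise_of_forall hf2))]
    simp [hf1 p a, mul_assoc]

lemma exists_reduced_prod_eq (hS : MergeClosed S)
    (hf1 : ∀ (p : Lam I) (a : I), f p = f (p.ext a false) * f (p.ext a true))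
    (hf2 : ∀ p q : Lam I, Commute (f p) (f q))
    (P : List (Lam I)) (hP : ∀ q ∈ P, q ∈ S) :
    ∃ Q : List (Lam I), Reduced Q ∧ (∀ q ∈ Q, q ∈ S) ∧
      (Q.map f).prod = (P.map f).prod := by
  by_cases hred : Reduced P
  · exact ⟨P, hred, hP, rfl⟩
  obtain ⟨P', hlt, hP', hprod⟩ := exists_shorter_of_not_reduced hS hf1 hf2 hP hred
  obtain ⟨Q, hQ, hQS, hQprod⟩ := exists_reduced_prod_eq hS hf1 hf2 P' hP'
  exact ⟨Q, hQ, hQS, hQprod.trans hprod⟩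
termination_by P.length

lemma exists_reduced_of_mem_closure_image (hS : MergeClosed S)
    (hf1 : ∀ (p : Lam I) (a : I), f p = f (p.ext a false) * f (p.ext a true))
    (hf2 : ∀ p q : Lam I, Commute (f p) (f q)) {x : M} (hx : x ∈ Submonoid.closure (f '' S)) :
    ∃ P : List (Lam I), Reduced P ∧ (∀ q ∈ P, q ∈ S) ∧ (P.map f).prod = x := by
  suffices ∃ P : List (Lam I), (∀ q ∈ P, q ∈ S) ∧ (P.map f).prod = x by
    obtain ⟨P, hP, rfl⟩ := this
    exact exists_reduced_prod_eq hS hf1 hf2 P hP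
  induction hx using Submonoid.closure_induction with
  | mem _ h =>
    obtain ⟨p, hp, rfl⟩ := h
    exact ⟨[p], by simpa using hp, by simp⟩
  | one => exact ⟨[], by simp, rfl⟩
  | mul _ _ _ _ hx hy =>
    obtain ⟨P, hP, rfl⟩ := hx
    obtain ⟨Q, hQ, rfl⟩ := hy
    exact ⟨P ++ Q, fun q hq => (List.mem_append.1 hq).elim (hP q) (hQ q), by simp⟩

lemma list_prod_map_mem_closure_image {ι : Type*} {g : ι → M} {T : Set ι} {P : List ι}
    (hP : ∀ q ∈ P, q ∈ T) : (P.map g).prod ∈ Submonoid.closure (g '' T) := by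
  refine Submonoid.list_prod_mem _ fun x hx => ?_
  obtain ⟨q, hq, rfl⟩ := List.mem_map.mp hx
  exact Submonoid.subset_closure ⟨q, hP q hq, rfl⟩

theorem iInf_closure_image_eq_closure_image_iInter {U : Sort*} [Nonempty U]
    {S : U → Set (Lam I)} (hS : ∀ u, MergeClosed (S u))
    (hf1 : ∀ (p : Lam I) (a : I), f p = f (p.ext a false) * f (p.ext a true))
    (hf2 : ∀ p q : Lam I, Commute (f p) (f q))
    (hf3 : ∀ P Q : List (Lam I), Reduced P → Reduced Q → ¬ P.Perm Q →
      (P.map f).prod ≠ (Q.map f).prod) :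
    ⨅ u, Submonoid.closure (f '' S u) = Submonoid.closure (f '' ⋂ u, S u) := by
  refine le_antisymm (fun x hx => ?_)
    (le_iInf fun u => Submonoid.closure_mono (Set.image_mono (Set.iInter_subset S u)))
  have hxu (u : U) :
      ∃ P : List (Lam I), Reduced P ∧ (∀ q ∈ P, q ∈ S u) ∧ (P.map f).prod = x :=
    exists_reduced_of_mem_closure_image (hS u) hf1 hf2 (Submonoid.mem_iInf.1 hx u)
  obtain ⟨P₀, hP₀, -, rfl⟩ := hxu (Classical.arbitrary U)
  refine list_prod_map_mem_closure_image fun q hq => Set.mem_iInter.2 fun u => ?_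
  obtain ⟨P, hP, hPS, hPx⟩ := hxu u
  have hperm : P₀.Perm P := not_not.1 fun h => hf3 P₀ P hP₀ hP h hPx.symm
  exact hPS q (hperm.mem_iff.1 hq)

end Reduction

lemma MulAction.toEndHom_injective {G α : Type*} [Monoid G] [MulAction G α] [FaithfulSMul G α] :
    Function.Injective (MulAction.toEndHom : G →* Function.End α) :=
  fun _ _ h => FaithfulSMul.eq_of_smul_eq_smul (congrFun h)

lemma Fmon_eq_map_closure {α : Type u} {L : Type v} [CompleteLattice L]
    (f : Lam I → Equiv.Perm α) (c : Lam I → L) (J : Set L) :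
    Fmon f c J = (Submonoid.closure (f '' (c ⁻¹' J))).map MulAction.toEndHom := by
  rw [MonoidHom.map_mclosure, Set.image_image, Fmon]
  congr 1
  ext g
  exact ⟨fun ⟨p, hp, e⟩ => ⟨p, hp, e.symm⟩, fun ⟨p, hp, e⟩ => ⟨p, hp, e.symm⟩⟩

/-- given a `κ`-ICE `f` on an infinite `λ` (`κ = 2 ^ #λ`) and an enumeration `c`
of the nonbottom compact elements `C` of a complete algebraic lattice `L` with properties
(1)–(3), for every nonempty family of ideals `J u` of `(C, ∨)` the intersection of the
submonoids `F(J u)` is `F(⋂_u J u)`. -/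
theorem sInf_Fmon (α : Type u) (I : Type u)
    (f : Lam I → Equiv.Perm α)
    (hf1 : ∀ (p : Lam I) (a : I), f p = f (Lam.ext p a false) * f (Lam.ext p a true))
    (hf2 : ∀ p q : Lam I, f p * f q = f q * f p)
    (hf3 : ∀ P Q : List (Lam I), Reduced P → Reduced Q → ¬ P.Perm Q →
      (P.map f).prod ≠ (Q.map f).prod)
    (L : Type v) [CompleteLattice L]
    (C : Set L) (c : Lam I → L) (hcC : ∀ p, c p ∈ C)
    (h2 : ∀ (p : Lam I) (a : I), c p ≤ c (Lam.ext p a false) ⊔ c (Lam.ext p a true))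
    (U : Type w) [Nonempty U] (J : U → Set L) (hJ : ∀ u, IsIdealIn C (J u)) :
    (⨅ u, Fmon f c (J u)) = Fmon f c (⋂ u, J u) := by
  have hS (u : U) : MergeClosed (c ⁻¹' J u) := (hJ u).mergeClosed_preimage hcC h2
  simp only [Fmon_eq_map_closure, ← Submonoid.map_iInf _ MulAction.toEndHom_injective,
    Set.preimage_iInter, iInf_closure_image_eq_closure_image_iInter hS hf1 hf2 hf3]
end

section
/- Let λ be an infinite type, let κ = 2^#λ, and let {f_{(η,φ)} : (η,φ) ∈ Λ_κ} be a κ-branching independent composition engine on λ. Let L be a complete algebraic lattice, let C be the set of compact elements of L other than the smallest element, and let c : Λ_κ → C be a surjective enumeration satisfying: (2) for all (η,φ) ∈ Λ_κ and α < κ, c_{(η,φ)} ≤ c_{(η*α, φ*0)} ∨ c_{(η*α, φ*1)}. For an ideal I of the join-semilattice (C, ∨), let F(I) denote the submonoid of λ^λ generated by {f_{(η,φ)} : c_{(η,φ)} ∈ I}. Then for any two distinct ideals I and J of (C, ∨), F(I) ≠ F(J). -/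
universe u v

lemma Lam.ext_false_ne_true {I : Type u} (p : Lam I) (a : I) :
    Lam.ext p a false ≠ Lam.ext p a true := by
  simp [Lam.ext, Subtype.ext_iff]

lemma Reduced.singleton {I : Type u} (p : Lam I) : Reduced [p] := by
  rintro ⟨r, a, h0, h1⟩
  rw [List.mem_singleton] at h0 h1
  exact Lam.ext_false_ne_true r a (h0.trans h1.symm)

lemma IsIdealIn.mem_of_ext_mem {I : Type u} {L : Type v} [CompleteLattice L] {C J : Set L}
    (hJ : IsIdealIn C J) {c : Lam I → L} (hcC : ∀ p, c p ∈ C)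
    (h2 : ∀ (p : Lam I) (a : I), c p ≤ c (Lam.ext p a false) ⊔ c (Lam.ext p a true))
    {p : Lam I} {a : I} (h0 : c (Lam.ext p a false) ∈ J) (h1 : c (Lam.ext p a true) ∈ J) :
    c p ∈ J :=
  hJ.2.1 _ (hJ.2.2 _ h0 _ h1) _ (hcC p) (h2 p a)

section Reduction

variable {I : Type u} {G : Type*} [Monoid G] {f : Lam I → G}
  (hf1 : ∀ (p : Lam I) (a : I), f p = f (Lam.ext p a false) * f (Lam.ext p a true))
  (hf2 : ∀ p q : Lam I, Commute (f p) (f q))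
  {S : Set (Lam I)}
  (hS : ∀ (p : Lam I) (a : I), Lam.ext p a false ∈ S → Lam.ext p a true ∈ S → p ∈ S)
include hf1 hf2 hS

lemma exists_shorter_prod_eq_of_not_reduced {Q : List (Lam I)} (hQS : ∀ q ∈ Q, q ∈ S)
    (hQ : ¬ Reduced Q) :
    ∃ Q' : List (Lam I), Q'.length < Q.length ∧ (∀ q ∈ Q', q ∈ S) ∧
      (Q'.map f).prod = (Q.map f).prod := by
  classical
  obtain ⟨r, a, h0, h1⟩ := not_not.mp hQ
  have h1' : Lam.ext r a true ∈ Q.erase (Lam.ext r a false) :=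
    (List.mem_erase_of_ne (Lam.ext_false_ne_true r a).symm).mpr h1
  set Q₂ := (Q.erase (Lam.ext r a false)).erase (Lam.ext r a true)
  have hperm : Q.Perm (Lam.ext r a false :: Lam.ext r a true :: Q₂) :=
    (List.perm_cons_erase h0).trans ((List.perm_cons_erase h1').cons _)
  have hQ₂ : ∀ q ∈ Q₂, q ∈ Q := fun _ hq => List.mem_of_mem_erase (List.mem_of_mem_erase hq)
  refine ⟨r :: Q₂, ?_, ?_, ?_⟩
  · simp [hperm.length_eq]
  · simpa [hS r a (hQS _ h0) (hQS _ h1)] using fun q hq => hQS q (hQ₂ q hq)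
  · have hcomm : (Q.map f).Pairwise Commute :=
      List.pairwise_map.mpr (List.pairwise_of_forall_mem_list fun p _ q _ => hf2 p q)
    rw [(hperm.map f).prod_eq' hcomm]
    simp [← mul_assoc, ← hf1]

lemma exists_reduced_prod_eq_s11 (Q : List (Lam I)) (hQS : ∀ q ∈ Q, q ∈ S) :
    ∃ Q' : List (Lam I), Reduced Q' ∧ (∀ q ∈ Q', q ∈ S) ∧
      (Q'.map f).prod = (Q.map f).prod := by
  induction h : Q.length using Nat.strong_induction_on generalizing Q with
  | _ n ih =>
    by_cases hQ : Reduced Q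
    · exact ⟨Q, hQ, hQS, rfl⟩
    obtain ⟨Q₁, hlen, hQ₁S, hQ₁⟩ :=
      exists_shorter_prod_eq_of_not_reduced hf1 hf2 hS hQS hQ
    obtain ⟨Q', hred, hQ'S, hQ'⟩ := ih _ (h ▸ hlen) Q₁ hQ₁S rfl
    exact ⟨Q', hred, hQ'S, hQ'.trans hQ₁⟩

end Reduction

lemma eq_singleton_of_prod_eq {I : Type u} {G : Type*} [Monoid G] {f : Lam I → G}
    (hf3 : ∀ P Q : List (Lam I), Reduced P → Reduced Q → ¬ P.Perm Q →
      (P.map f).prod ≠ (Q.map f).prod)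
    {Q : List (Lam I)} (hQ : Reduced Q) {p : Lam I} (h : (Q.map f).prod = f p) : Q = [p] := by
  by_contra hne
  refine hf3 Q [p] hQ (Reduced.singleton p) (fun hperm => hne ?_) (by simpa using h)
  exact List.perm_singleton.mp hperm

lemma exists_list_of_mem_Fmon {α I : Type u} {L : Type v} [CompleteLattice L]
    {f : Lam I → Equiv.Perm α} {c : Lam I → L} {J : Set L} {g : Function.End α}
    (hg : g ∈ Fmon f c J) :
    ∃ Q : List (Lam I), (∀ q ∈ Q, c q ∈ J) ∧ g = ⇑(Q.map f).prod := by
  induction hg using Submonoid.closure_induction with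
  | mem g hg =>
    obtain ⟨p, hp, rfl⟩ := hg
    exact ⟨[p], by simpa using hp, by rw [List.map_singleton, List.prod_singleton]⟩
  | one => exact ⟨[], by simp, rfl⟩
  | mul g h _ _ hg hh =>
    obtain ⟨Q₁, hQ₁, rfl⟩ := hg
    obtain ⟨Q₂, hQ₂, rfl⟩ := hh
    refine ⟨Q₁ ++ Q₂, fun q hq => ?_, by simp; rfl⟩
    rcases List.mem_append.mp hq with hq | hq
    exacts [hQ₁ q hq, hQ₂ q hq]

lemma coe_mem_Fmon_iff {α I : Type u} {L : Type v} [CompleteLattice L]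
    {f : Lam I → Equiv.Perm α}
    (hf1 : ∀ (p : Lam I) (a : I), f p = f (Lam.ext p a false) * f (Lam.ext p a true))
    (hf2 : ∀ p q : Lam I, f p * f q = f q * f p)
    (hf3 : ∀ P Q : List (Lam I), Reduced P → Reduced Q → ¬ P.Perm Q →
      (P.map f).prod ≠ (Q.map f).prod)
    {C J : Set L} (hJ : IsIdealIn C J) {c : Lam I → L} (hcC : ∀ p, c p ∈ C)
    (h2 : ∀ (p : Lam I) (a : I), c p ≤ c (Lam.ext p a false) ⊔ c (Lam.ext p a true))
    (p : Lam I) : ⇑(f p) ∈ Fmon f c J ↔ c p ∈ J := by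
  refine ⟨fun hp => ?_, fun hp => Submonoid.subset_closure ⟨p, hp, rfl⟩⟩
  obtain ⟨Q, hQJ, hQ⟩ := exists_list_of_mem_Fmon hp
  obtain ⟨Q', hred, hQ'J, hQ'⟩ := exists_reduced_prod_eq_s11 (S := c ⁻¹' J) hf1 hf2
    (fun _ _ h0 h1 => hJ.mem_of_ext_mem hcC h2 h0 h1) Q hQJ
  have hQ'p : Q' = [p] :=
    eq_singleton_of_prod_eq hf3 hred (hQ'.trans (DFunLike.coe_injective hQ).symm)
  exact hQ'J p (by simp [hQ'p])

theorem Fmon_injective_general (α : Type u) (I : Type u)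
    (f : Lam I → Equiv.Perm α)
    (hf1 : ∀ (p : Lam I) (a : I), f p = f (Lam.ext p a false) * f (Lam.ext p a true))
    (hf2 : ∀ p q : Lam I, f p * f q = f q * f p)
    (hf3 : ∀ P Q : List (Lam I), Reduced P → Reduced Q → ¬ P.Perm Q →
      (P.map f).prod ≠ (Q.map f).prod)
    (L : Type v) [CompleteLattice L]
    (C : Set L)
    (c : Lam I → L)
    (hcC : ∀ p, c p ∈ C) (hcsurj : ∀ x ∈ C, ∃ p, c p = x)
    (h2 : ∀ (p : Lam I) (a : I), c p ≤ c (Lam.ext p a false) ⊔ c (Lam.ext p a true))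
    (J J' : Set L) (hJ : IsIdealIn C J) (hJ' : IsIdealIn C J') (hne : J ≠ J') :
    Fmon f c J ≠ Fmon f c J' := by
  intro heq
  refine hne (Set.ext fun x => ?_)
  by_cases hx : x ∈ C
  · obtain ⟨p, rfl⟩ := hcsurj x hx
    rw [← coe_mem_Fmon_iff hf1 hf2 hf3 hJ hcC h2, ← coe_mem_Fmon_iff hf1 hf2 hf3 hJ' hcC h2,
      heq]
  · exact iff_of_false (fun h => hx (hJ.1 h)) (fun h => hx (hJ'.1 h))

/-- given a `κ`-ICE `f` on an infinite `λ` (`κ = 2 ^ #λ`) and an enumeration `c`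
of the nonbottom compact elements `C` of a complete algebraic lattice `L` satisfying property
(2), distinct ideals of `(C, ∨)` give rise to distinct submonoids: `I ≠ J → F(I) ≠ F(J)`. -/
theorem Fmon_injective (α : Type u) [Infinite α] (I : Type u)
    (hI : Cardinal.mk I = 2 ^ Cardinal.mk α)
    (f : Lam I → Equiv.Perm α)
    (hf1 : ∀ (p : Lam I) (a : I), f p = f (Lam.ext p a false) * f (Lam.ext p a true))
    (hf2 : ∀ p q : Lam I, f p * f q = f q * f p)
    (hf3 : ∀ P Q : List (Lam I), Reduced P → Reduced Q → ¬ P.Perm Q →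
      (P.map f).prod ≠ (Q.map f).prod)
    (L : Type v) [CompleteLattice L]
    (halg : ∀ x : L, sSup {d : L | IsCompactElement d ∧ d ≤ x} = x)
    (C : Set L) (hC : C = {x : L | IsCompactElement x ∧ x ≠ ⊥})
    (c : Lam I → L)
    (hcC : ∀ p, c p ∈ C) (hcsurj : ∀ x ∈ C, ∃ p, c p = x)
    (h2 : ∀ (p : Lam I) (a : I), c p ≤ c (Lam.ext p a false) ⊔ c (Lam.ext p a true))
    (J J' : Set L) (hJ : IsIdealIn C J) (hJ' : IsIdealIn C J') (hne : J ≠ J') :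
    Fmon f c J ≠ Fmon f c J' :=
  Fmon_injective_general α I f hf1 hf2 hf3 L C c hcC hcsurj h2 J J' hJ hJ' hne
end

section
/- Let κ be an infinite cardinal and let L be a complete algebraic lattice with at most κ compact elements, and let C be the set of compact elements of L other than the smallest element (assume C is nonempty). Then there exists a surjective enumeration c : Λ_κ → C (possibly with repetitions) such that: (1) every element of C equals c_{(⟨α⟩,⟨0⟩)} for some α < κ; (2) for all (η,φ) ∈ Λ_κ and all α < κ, c_{(η,φ)} ≤ c_{(η*α, φ*0)} ∨ c_{(η*α, φ*1)}; (3) for all (η,φ) ∈ Λ_κ and all d, d' ∈ C with c_{(η,φ)} ≤ d ∨ d', there exists α < κ such that d = c_{(η*α, φ*0)} and d' = c_{(η*α, φ*1)}. -/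
/-!
Fix surjections from `ι` onto `C` and, for each `x ∈ C`, onto the pairs `(d, d') ∈ C × C` with
`x ≤ d ⊔ d'`; the latter exist because there are at most `κ · κ = κ` such pairs and `(x, x)` is
one of them. Labelling the roots `(⟨a⟩, ⟨φ⟩)` by the first surjection and, recursively, the two
children `(η * a, φ * 0)` and `(η * a, φ * 1)` of a node labelled `x` by the two components of
the `a`-th covering pair of `x` gives the enumeration.
-/

open Cardinal Function

universe u

namespace Lam

variable {ι : Type u} {α : Type*}

def label (root : ι → α) (step : α → ι × Bool → α) (p : Lam ι) : α :=
  p.val.tail.foldl step (root (p.val.head p.2).1)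

@[simp]
theorem label_ext (root : ι → α) (step : α → ι × Bool → α) (p : Lam ι) (a : ι) (b : Bool) :
    label root step (p.ext a b) = step (label root step p) (a, b) := by
  simp [label, Lam.ext, List.head_append_of_ne_nil p.2, List.tail_append_of_ne_nil p.2]

end Lam

theorem exists_surjective_of_mk_le {ι β : Type u} [Nonempty β] (h : #β ≤ #ι) :
    ∃ f : ι → β, Surjective f :=
  let ⟨f⟩ := h
  ⟨invFun f, invFun_surjective f.injective⟩

section CoveringPairs

variable {α : Type u} [SemilatticeSup α] (C : Set α)

def coveringPairs (x : α) : Set (C × C) :=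
  {q | x ≤ (q.1 : α) ⊔ q.2}

theorem coveringPairs_nonempty {x : α} (hx : x ∈ C) : (coveringPairs C x).Nonempty :=
  ⟨(⟨x, hx⟩, ⟨x, hx⟩), le_sup_left⟩

theorem mk_coveringPairs_le {ι : Type u} [Infinite ι] {C : Set α} (hC : #C ≤ #ι) (x : α) :
    #(coveringPairs C x) ≤ #ι :=
  calc #(coveringPairs C x) ≤ #(C × C) := mk_set_le _
    _ = #C * #C := by rw [mk_prod, lift_id]
    _ ≤ #ι := mul_le_of_le (aleph0_le_mk ι) hC hC

end CoveringPairs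

theorem exists_lam_enumeration {ι α : Type u} [Infinite ι] [SemilatticeSup α] {C : Set α}
    (hne : C.Nonempty) (hC : #C ≤ #ι) :
    ∃ c : Lam ι → C,
      (∀ x : C, ∃ a : ι, c ⟨[(a, false)], by simp⟩ = x) ∧
      (∀ (p : Lam ι) (a : ι), (c p : α) ≤ (c (p.ext a false) : α) ⊔ c (p.ext a true)) ∧
      (∀ (p : Lam ι) (d d' : C), (c p : α) ≤ (d : α) ⊔ d' →
        ∃ a : ι, d = c (p.ext a false) ∧ d' = c (p.ext a true)) := by
  have := hne.to_subtype
  obtain ⟨root, hroot⟩ := exists_surjective_of_mk_le hC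
  have hcover (x : C) : ∃ f : ι → coveringPairs C x, Surjective f :=
    have := (coveringPairs_nonempty C x.2).to_subtype
    exists_surjective_of_mk_le (mk_coveringPairs_le hC x)
  choose cover hcover using hcover
  let c := Lam.label root fun x ab => cond ab.2 (cover x ab.1).1.2 (cover x ab.1).1.1
  refine ⟨c, fun x => ?_, fun p a => ?_, fun p d d' hle => ?_⟩
  · obtain ⟨a, rfl⟩ := hroot x
    exact ⟨a, rfl⟩
  · simp only [c, Lam.label_ext, cond_false, cond_true]
    exact (cover (c p) a).2
  · obtain ⟨a, ha⟩ := hcover (c p) ⟨(d, d'), hle⟩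
    exact ⟨a, by simp [c, ha], by simp [c, ha]⟩

/-- let `κ` be an infinite cardinal (the cardinality of `ι`), let `L` be a
complete algebraic lattice with at most `κ` compact elements, and let `C` be the (nonempty) set
of compact elements of `L` other than `⊥`. Then there is a surjective enumeration
`c : Λ_κ → C`, possibly with repetitions, such that: (1) every element of `C` equals
`c (⟨a⟩, ⟨0⟩)` for some `a`; (2) `c (η,φ) ≤ c (η*a, φ*0) ⊔ c (η*a, φ*1)` always; and (3)
whenever `c (η,φ) ≤ d ⊔ d'` with `d, d' ∈ C`, there is `a` with `d = c (η*a, φ*0)` and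
`d' = c (η*a, φ*1)`. -/
theorem exists_enumeration (ι : Type u) [Infinite ι] (L : Type u) [CompleteLattice L]
    (hcard : Cardinal.mk {x : L // CompleteLattice.IsCompactElement x} ≤ Cardinal.mk ι)
    (C : Set L) (hC : C = {x : L | CompleteLattice.IsCompactElement x ∧ x ≠ ⊥})
    (hne : C.Nonempty) :
    ∃ c : Lam ι → L,
      (∀ p, c p ∈ C) ∧ (∀ x ∈ C, ∃ p, c p = x) ∧
      (∀ x ∈ C, ∃ a : ι, c ⟨[(a, false)], by simp⟩ = x) ∧
      (∀ (p : Lam ι) (a : ι), c p ≤ c (Lam.ext p a false) ⊔ c (Lam.ext p a true)) ∧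
      (∀ p : Lam ι, ∀ d ∈ C, ∀ d' ∈ C, c p ≤ d ⊔ d' →
        ∃ a : ι, d = c (Lam.ext p a false) ∧ d' = c (Lam.ext p a true)) := by
  have hCcard : #C ≤ #ι :=
    (mk_subtype_le_of_subset fun x hx => by rw [hC] at hx; exact hx.1).trans hcard
  obtain ⟨c, hroots, hcovered, hcovers⟩ := exists_lam_enumeration hne hCcard
  have hroots' (x : L) (hx : x ∈ C) : ∃ a : ι, (c ⟨[(a, false)], by simp⟩ : L) = x :=
    (hroots ⟨x, hx⟩).imp fun _ ha => congrArg Subtype.val ha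
  refine ⟨fun p => c p, fun p => (c p).2, fun x hx => ?_, hroots', hcovered,
    fun p d hd d' hd' hle => ?_⟩
  · obtain ⟨a, ha⟩ := hroots' x hx
    exact ⟨_, ha⟩
  · obtain ⟨a, ha, ha'⟩ := hcovers p ⟨d, hd⟩ ⟨d', hd'⟩ hle
    exact ⟨a, congrArg Subtype.val ha, congrArg Subtype.val ha'⟩
end

section
/- Let λ be a type. The map that sends each subgroup G of the symmetric group Equiv.Perm λ to the submonoid of the monoid λ^λ (functions from λ to λ under composition) whose elements are the underlying functions of the permutations in G is injective and preserves all nonempty suprema and all nonempty infima; moreover it sends the trivial subgroup to the trivial submonoid containing only the identity. In other words, the lattice of permutation groups on λ is (up to the smallest and largest elements) a closed sublattice of the lattice of transformation monoids on λ. -/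
/-- The monoid homomorphism sending a permutation of `α` to its underlying function, viewed as
an element of the monoid `Function.End α` of all functions `α → α` under composition. -/
def permToEnd (α : Type u) : Equiv.Perm α →* Function.End α where
  toFun g := ⇑g
  map_one' := rfl
  map_mul' _ _ := rfl

lemma permToEnd_injective (α : Type u) : Function.Injective (permToEnd α) :=
  fun _ _ h => Equiv.coe_fn_injective h

/-- `Subgroup.toSubmonoid` preserves suprema. -/
lemma toSubmonoid_sSup {G : Type*} [Group G] (S : Set (Subgroup G)) :
    (sSup S).toSubmonoid = sSup (Subgroup.toSubmonoid '' S) := by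
  refine le_antisymm ?_ ?_
  · have hinv : ∀ x : G, x ∈ sSup (Subgroup.toSubmonoid '' S) →
        x⁻¹ ∈ sSup (Subgroup.toSubmonoid '' S) := by
      intro x hx
      rw [sSup_eq_iSup'] at hx ⊢
      refine Submonoid.iSup_induction (x := x)
        (fun T : Subgroup.toSubmonoid '' S => (T : Submonoid G)) hx ?_ ?_ ?_
      · rintro ⟨T, ⟨H, hH, rfl⟩⟩ y hy
        exact le_iSup (fun T : Subgroup.toSubmonoid '' S => (T : Submonoid G))
          ⟨H.toSubmonoid, H, hH, rfl⟩ (H.inv_mem hy)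
      · simpa using Submonoid.one_mem _
      · intro a b ha hb
        rw [mul_inv_rev]
        exact Submonoid.mul_mem _ hb ha
    set H : Subgroup G :=
      { toSubmonoid := sSup (Subgroup.toSubmonoid '' S)
        inv_mem' := fun {x} hx => hinv x hx }
    have : sSup S ≤ H := by
      apply sSup_le
      intro K hK y hy
      exact (le_sSup (Set.mem_image_of_mem Subgroup.toSubmonoid hK) :
        K.toSubmonoid ≤ sSup (Subgroup.toSubmonoid '' S)) hy
    exact fun x hx => this hx
  · apply sSup_le
    rintro T ⟨K, hK, rfl⟩
    exact fun x hx => (le_sSup hK : K ≤ sSup S) hx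

/-- the map sending a subgroup `G` of `Equiv.Perm α` to the submonoid of
`Function.End α` whose elements are the underlying functions of the permutations in `G` is
injective, preserves all nonempty suprema and all nonempty infima, and sends the trivial
subgroup to the trivial submonoid. -/
theorem subgroupLattice_closed_in_monLattice (α : Type u) :
    Function.Injective
      (fun G : Subgroup (Equiv.Perm α) => Submonoid.map (permToEnd α) G.toSubmonoid) ∧
    (∀ S : Set (Subgroup (Equiv.Perm α)), S.Nonempty →
      Submonoid.map (permToEnd α) (sSup S).toSubmonoid =
        sSup ((fun G : Subgroup (Equiv.Perm α) => Submonoid.map (permToEnd α) G.toSubmonoid)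
          '' S)) ∧
    (∀ S : Set (Subgroup (Equiv.Perm α)), S.Nonempty →
      Submonoid.map (permToEnd α) (sInf S).toSubmonoid =
        sInf ((fun G : Subgroup (Equiv.Perm α) => Submonoid.map (permToEnd α) G.toSubmonoid)
          '' S)) ∧
    Submonoid.map (permToEnd α) ((⊥ : Subgroup (Equiv.Perm α)).toSubmonoid) =
      (⊥ : Submonoid (Function.End α)) := by
  have hf := permToEnd_injective α
  refine ⟨?_, ?_, ?_, ?_⟩
  · intro G H h
    have := Submonoid.map_injective_of_injective hf h
    exact Subgroup.toSubmonoid_injective this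
  · intro S _
    rw [toSubmonoid_sSup, (Submonoid.gc_map_comap (permToEnd α)).l_sSup]
    rw [iSup_image, sSup_image]
  · intro S ⟨G₀, hG₀⟩
    ext x
    simp only [Submonoid.mem_map, Subgroup.mem_toSubmonoid, Subgroup.mem_sInf,
      Submonoid.mem_sInf, Set.mem_image, forall_exists_index]
    constructor
    · rintro ⟨g, hg, rfl⟩ T G ⟨hG, rfl⟩
      exact ⟨g, hg G hG, rfl⟩
    · intro h
      obtain ⟨g₀, hg₀, hx₀⟩ := h _ G₀ ⟨hG₀, rfl⟩
      refine ⟨g₀, fun G hG => ?_, hx₀⟩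
      obtain ⟨g, hg, hx⟩ := h _ G ⟨hG, rfl⟩
      have : g = g₀ := hf (hx.trans hx₀.symm)
      exact this ▸ hg
  · rw [Subgroup.bot_toSubmonoid, Submonoid.map_bot]
end
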